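/- arXiv:1208.3566 — 13 statements merged into one kernel-verified Lean document; each statement's English description precedes it below -/
import Mathlib

section
/- Let G be a finite group such that the index [G : [G,G]] of the commutator subgroup of G in G is odd (G is 2-perfect). Then no Sylow 2-subgroup of G is of GK type. -/
/-!
By the focal subgroup theorem, `[G,G] ∩ P` is the subgroup `P*` generated by the elements
`x y⁻¹` with `x, y ∈ P` conjugate in `G`. As `[G : [G,G]]` is odd, `P ≤ [G,G]`, so `P* = P`.
But a GK kernel `K` of `P` has index 2 and membership in it depends only on the order of an
element, so conjugate `x, y ∈ P` lie in the same coset of `K`, whence `P* ≤ K < P`.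
-/

/-- A finite `p`-group is of Gorenstein-Kulkarni (GK) type if the set of its elements of
non-maximal order is the underlying set of a maximal subgroup. -/
def IsGKType (P : Type*) [Group P] : Prop :=
  ∃ K : Subgroup P, IsCoatom K ∧ (K : Set P) = {x : P | orderOf x < Monoid.exponent P}

open Subgroup

theorem IsPGroup.index_eq_of_isCoatom {p : ℕ} [hp : Fact p.Prime] {P : Type*} [Group P]
    [Finite P] (hP : IsPGroup p P) {K : Subgroup P} (hK : IsCoatom K) : K.index = p := by
  have := hP.isNilpotent
  have : K.Normal := Group.normalizerCondition_of_isNilpotent.normal_of_coatom K hK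
  have : Nontrivial (P ⧸ K) := QuotientGroup.nontrivial_iff.mpr hK.1
  obtain ⟨n, hn, hcard⟩ := (hP.to_quotient K).nontrivial_iff_card.mp this
  obtain ⟨y, hy⟩ := exists_prime_orderOf_dvd_card' p (hcard ▸ dvd_pow_self p hn.ne')
  obtain ⟨z, rfl⟩ := QuotientGroup.mk'_surjective K y
  have hz : z ∉ K := fun h => hp.out.one_lt.ne' <| by
    rwa [← hy, orderOf_eq_one_iff, QuotientGroup.mk'_apply, QuotientGroup.eq_one_iff]
  have hcomap : (zpowers (QuotientGroup.mk' K z)).comap (QuotientGroup.mk' K) = ⊤ :=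
    hK.2 _ (SetLike.lt_iff_le_and_exists.mpr
      ⟨QuotientGroup.le_comap_mk' K _, z, mem_zpowers _, hz⟩)
  have htop : zpowers (QuotientGroup.mk' K z) = ⊤ := by
    rw [← map_comap_eq_self_of_surjective (QuotientGroup.mk'_surjective K) (zpowers _), hcomap,
      ← MonoidHom.range_eq_map, QuotientGroup.range_mk']
  rw [index_eq_card, ← hy, ← Nat.card_zpowers, htop, card_top]

theorem IsPGroup.le_of_coprime_index {p : ℕ} {G : Type*} [Group G] {P : Subgroup G}
    (hP : IsPGroup p P) {N : Subgroup G} [N.Normal] (hN : p.Coprime N.index) : P ≤ N := by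
  intro x hx
  obtain ⟨y, hy⟩ := (hP.powEquiv hN).surjective ⟨x, hx⟩
  have hxy : x = (y : G) ^ N.index := by rw [← coe_pow, ← hP.powEquiv_apply hN, hy]
  exact hxy ▸ N.pow_index_mem y

open scoped commutatorElement in
theorem Subgroup.focalSubgroupOf_le_of_index_eq_two {G : Type*} [Group G] {H : Subgroup G}
    {K : Subgroup H} (hK : K.index = 2)
    (hconj : ∀ (x y : H) (u : G), (y : G) = u * x * u⁻¹ → (x ∈ K ↔ y ∈ K)) :
    H.focalSubgroupOf ≤ K := by
  rw [focalSubgroupOf_eq_closure, closure_le]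
  rintro g ⟨x, hx, u, hg⟩
  have hy : u * x⁻¹ * u⁻¹ ∈ H := by
    convert mul_mem (inv_mem hx) g.2 using 1
    rw [hg, commutatorElement_def]; group
  have hgxy : g = ⟨x, hx⟩ * ⟨u * x⁻¹ * u⁻¹, hy⟩ := by
    ext; rw [hg, commutatorElement_def]; simp [mul_assoc]
  rw [SetLike.mem_coe, hgxy, mul_mem_iff_of_index_two hK, ← inv_mem_iff]
  exact hconj _ _ u (by simp [mul_assoc])

theorem stmt_1 (G : Type*) [Group G] [Finite G]
    (hodd : Odd (commutator G).index) :
    ∀ P : Sylow 2 G, ¬ IsGKType (P : Subgroup G) := by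
  rintro P ⟨K, hKmax, hKorder⟩
  have hmem (x : P) : x ∈ K ↔ orderOf x < Monoid.exponent P := Set.ext_iff.mp hKorder x
  have hfocal : (P : Subgroup G).focalSubgroupOf ≤ K := by
    refine focalSubgroupOf_le_of_index_eq_two (P.isPGroup'.index_eq_of_isCoatom hKmax)
      fun x y u hxy => ?_
    have hconj : SemiconjBy u x y := by rw [SemiconjBy, hxy, inv_mul_cancel_right]
    rw [hmem, hmem, ← orderOf_coe x, ← orderOf_coe y, hconj.orderOf_eq]
  have hPG' : (P : Subgroup G) ≤ commutator G :=
    P.isPGroup'.le_of_coprime_index (Nat.coprime_two_left.mpr hodd)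
  have hfocal_top : (P : Subgroup G).focalSubgroupOf = ⊤ := by
    rw [focalSubgroupOf_def, ← commutator_inf_eq_focalSubgroup, inf_eq_right.mpr hPG',
      subgroupOf_self]
  exact hKmax.1 (top_le_iff.mp (hfocal_top ▸ hfocal))
end

section
/- Let p be a prime and G a finite p-group of exponent p^e with e ≥ 1. Assume G is powerful, i.e. [G,G] ≤ G^p if p is odd, and [G,G] ≤ G^4 if p = 2, where for m ∈ ℕ, G^m denotes the subgroup of G generated by all m-th powers. Then the map G → G, x ↦ x^(p^(e-1)), is a group homomorphism; consequently the set 𝒦(G) := {x ∈ G : orderOf x < p^e} of elements of non-maximal order is a normal subgroup of G containing [G,G], so that G/𝒦(G) is abelian, i.e. G has the maximum exponent property. -/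
/-- For a group `G` and `m : ℕ`, `powSubgroup G m` is the subgroup of `G` generated by
all `m`-th powers of elements of `G`. -/
def powSubgroup (G : Type*) [Group G] (m : ℕ) : Subgroup G :=
  Subgroup.closure (Set.range fun x : G => x ^ m)

/-!
Write `q = p` for odd `p` and `q = 4` for `p = 2`, so that `G` is powerful when
`[G, G] ≤ G^q`. If the exponent of `G` divides `q p^n`, then every `p^n`-th power is central.
For `p^n = a q` this goes by induction on `|G|`: modulo a central subgroup `Z` of order `p`
the claim holds, so `[G^(aq), G] ≤ Z`, and hence every element of `G^(aq)` satisfies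
`w^q = 1`. The claim for `a` applied to `G / G^(aq)` puts `v = [c, y]` into `G^(aq)` for
`c = x^a`, and the collection formula `[c^q, y] = v^q [c, v]^(q choose 2)` then vanishes
because `p ∣ q choose 2`.

So for exponent `p^(n+1)` the subgroup `G^(p^n)` is central of exponent `p`, and
`(x y)^(p^n) = x^(p^n) y^(p^n)` follows by lifting the identity for `p^(n-1)` from
`G / G^(p^n)` and raising it to the `p`-th power. The kernel of `x ↦ x^(p^(e-1))` is `𝒦(G)`,
and it contains `G^q ≥ [G, G]`.
-/

open Subgroup
open scoped commutatorElement

section powSubgroup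

variable {G H : Type*} [Group G] [Group H]

theorem pow_mem_powSubgroup (g : G) (m : ℕ) : g ^ m ∈ powSubgroup G m :=
  subset_closure ⟨g, rfl⟩

theorem powSubgroup_le {m : ℕ} {K : Subgroup G} (h : ∀ g : G, g ^ m ∈ K) :
    powSubgroup G m ≤ K :=
  (closure_le K).mpr <| Set.range_subset_iff.mpr h

theorem map_powSubgroup_le (f : G →* H) (m : ℕ) :
    (powSubgroup G m).map f ≤ powSubgroup H m :=
  map_le_iff_le_comap.mpr <| powSubgroup_le fun g => by
    simpa only [mem_comap, map_pow] using pow_mem_powSubgroup (f g) m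

theorem map_powSubgroup_of_surjective {f : G →* H} (hf : Function.Surjective f) (m : ℕ) :
    (powSubgroup G m).map f = powSubgroup H m := by
  refine (map_powSubgroup_le f m).antisymm (powSubgroup_le fun h => ?_)
  obtain ⟨g, rfl⟩ := hf h
  exact ⟨g ^ m, pow_mem_powSubgroup g m, map_pow f g m⟩

instance powSubgroup_characteristic (m : ℕ) : (powSubgroup G m).Characteristic :=
  characteristic_iff_map_le.mpr fun φ => map_powSubgroup_le φ.toMonoidHom m

theorem commutator_le_powSubgroup_of_surjective {f : G →* H} (hf : Function.Surjective f)
    {m : ℕ} (h : commutator G ≤ powSubgroup G m) : commutator H ≤ powSubgroup H m := by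
  rw [commutator_def, ← map_top_of_surjective f hf, ← map_commutator, ← commutator_def,
    ← map_powSubgroup_of_surjective hf m]
  exact map_mono h

theorem commutator_le_powSubgroup_quotient (N : Subgroup G) [N.Normal] {m : ℕ}
    (h : commutator G ≤ powSubgroup G m) : commutator (G ⧸ N) ≤ powSubgroup (G ⧸ N) m :=
  commutator_le_powSubgroup_of_surjective (QuotientGroup.mk'_surjective N) h

theorem pow_eq_one_quotient (N : Subgroup G) [N.Normal] {m : ℕ} (h : ∀ g : G, g ^ m = 1)
    (x : G ⧸ N) : x ^ m = 1 :=
  QuotientGroup.induction_on x fun g => by rw [← QuotientGroup.mk_pow, h, QuotientGroup.mk_one]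

theorem pow_eq_one_quotient_powSubgroup (m : ℕ) (x : G ⧸ powSubgroup G m) : x ^ m = 1 :=
  QuotientGroup.induction_on x fun g =>
    (QuotientGroup.eq_one_iff _).mpr (pow_mem_powSubgroup g m)

theorem commutator_eq_one_of_pow_eq_one {m : ℕ} (hcomm : commutator G ≤ powSubgroup G m)
    (hexp : ∀ g : G, g ^ m = 1) (x y : G) : ⁅x, y⁆ = 1 := by
  have hbot : powSubgroup G m = ⊥ := eq_bot_iff.mpr <| powSubgroup_le fun g => by
    rw [hexp, mem_bot]
  simpa [hbot] using hcomm (commutator_mem_commutator (mem_top x) (mem_top y))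

theorem commutator_mem_of_quotient (N : Subgroup G) [N.Normal] {a : ℕ}
    (h : ∀ x y : G ⧸ N, ⁅x ^ a, y⁆ = 1) (x y : G) : ⁅x ^ a, y⁆ ∈ N := by
  rw [← QuotientGroup.eq_one_iff, ← QuotientGroup.mk'_apply, map_commutatorElement, map_pow]
  exact h _ _

end powSubgroup

section central

variable {G : Type*} [Group G]

theorem pow_mul_eq_of_mul_eq {a b d : G} (hd : d ∈ center G) (hba : b * a = d * a * b) (k : ℕ) :
    b ^ k * a = d ^ k * a * b ^ k := by
  induction k with
  | zero => simp
  | succ k ih =>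
    have hb : b * d ^ k = d ^ k * b := mem_center_iff.mp (pow_mem hd k) b
    calc b ^ (k + 1) * a = b * (b ^ k * a) := by group
      _ = b * d ^ k * a * b ^ k := by rw [ih]; group
      _ = d ^ k * (b * a) * b ^ k := by rw [hb]; group
      _ = d ^ (k + 1) * a * b ^ (k + 1) := by rw [hba]; group

theorem mul_pow_of_commutator_mem_center {a b : G} (h : ⁅b, a⁆ ∈ center G) (k : ℕ) :
    (a * b) ^ k = a ^ k * b ^ k * ⁅b, a⁆ ^ k.choose 2 := by
  set d := ⁅b, a⁆ with hd_def
  have hba : b * a = d * a * b := by rw [hd_def, commutatorElement_def]; group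
  induction k with
  | zero => simp
  | succ k ih =>
    have hd : a * b * d ^ k.choose 2 = d ^ k.choose 2 * (a * b) :=
      mem_center_iff.mp (pow_mem h _) _
    have ha : a * d ^ k = d ^ k * a := mem_center_iff.mp (pow_mem h _) _
    calc (a * b) ^ (k + 1) = a ^ k * (b ^ k * a) * b * d ^ k.choose 2 := by
          rw [pow_succ, ih, mul_assoc _ _ (a * b), ← hd]; group
      _ = a ^ (k + 1) * (d ^ k * b ^ (k + 1)) * d ^ k.choose 2 := by
          rw [pow_mul_eq_of_mul_eq h hba, ← ha]; group
      _ = a ^ (k + 1) * b ^ (k + 1) * d ^ (k + 1).choose 2 := by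
        rw [← mem_center_iff.mp (pow_mem h k) (b ^ (k + 1)), Nat.choose_succ_succ',
          Nat.choose_one_right, pow_add]
        group

theorem commutator_pow_left_of_mem_center {c y : G} (h : ⁅c, ⁅c, y⁆⁆ ∈ center G) (k : ℕ) :
    ⁅c ^ k, y⁆ = ⁅c, y⁆ ^ k * ⁅c, ⁅c, y⁆⁆ ^ k.choose 2 := by
  set v := ⁅c, y⁆ with hv
  have hconj : ⁅v, c⁻¹⁆ = ⁅c, v⁆ := by
    rw [commutatorElement_inv_right, mul_assoc, ← mem_center_iff.mp h c, inv_mul_cancel_left]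
  have hcv : c⁻¹ * v = y * c⁻¹ * y⁻¹ := by rw [hv, commutatorElement_def]; group
  calc ⁅c ^ k, y⁆ = c ^ k * (c⁻¹ * v) ^ k := by
        rw [hcv, conj_pow, commutatorElement_def, inv_pow]; group
    _ = v ^ k * ⁅c, v⁆ ^ k.choose 2 := by
        rw [mul_pow_of_commutator_mem_center (hconj ▸ h), hconj, inv_pow]; group

theorem mem_center_of_forall_commutator_eq_one {g : G} (h : ∀ t : G, ⁅g, t⁆ = 1) :
    g ∈ center G :=
  mem_center_iff.mpr fun t => (commutatorElement_eq_one_iff_mul_comm.mp (h t)).symm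

theorem pow_eq_one_of_mem_closure {Z : Subgroup G} (hZ : Z ≤ center G) {q : ℕ}
    (hZq : ∀ z ∈ Z, z ^ q.choose 2 = 1) {S : Set G} (hS : ∀ s ∈ S, s ^ q = 1)
    (hSZ : ∀ u ∈ closure S, ∀ w ∈ closure S, ⁅u, w⁆ ∈ Z) {w : G} (hw : w ∈ closure S) :
    w ^ q = 1 := by
  induction hw using closure_induction with
  | mem s hs => exact hS s hs
  | one => exact one_pow q
  | mul u w hu hw ihu ihw =>
    rw [mul_pow_of_commutator_mem_center (hZ (hSZ w hw u hu)), ihu, ihw, hZq _ (hSZ w hw u hu),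
      one_mul, one_mul]
  | inv u _ ihu => rw [inv_pow, ihu, inv_one]

theorem pow_eq_one_of_mem_powSubgroup {m k : ℕ} (hc : ∀ x : G, x ^ m ∈ center G)
    (hk : ∀ x : G, x ^ (m * k) = 1) {w : G} (hw : w ∈ powSubgroup G m) : w ^ k = 1 := by
  have hcen : powSubgroup G m ≤ center G := powSubgroup_le hc
  refine pow_eq_one_of_mem_closure bot_le (fun z hz => by rw [mem_bot.mp hz, one_pow]) ?_
    (fun u hu w _ => ?_) hw
  · rintro _ ⟨x, rfl⟩
    rw [← pow_mul, hk]
  · rw [mem_bot, commutatorElement_eq_one_iff_mul_comm]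
    exact (mem_center_iff.mp (hcen hu) w).symm

theorem Subgroup.normal_of_le_center {Z : Subgroup G} (hZ : Z ≤ center G) : Z.Normal :=
  ⟨fun z hz g => by rwa [mem_center_iff.mp (hZ hz) g, mul_inv_cancel_right]⟩

theorem commutator_pow_mul_eq_one_of_quotients {p q a : ℕ} (Z : Subgroup G) [Z.Normal]
    (hZ : Z ≤ center G) (hZp : ∀ z ∈ Z, z ^ p = 1) (hpq : p ∣ q.choose 2)
    (hN : ∀ x y : G ⧸ powSubgroup G (a * q), ⁅x ^ a, y⁆ = 1)
    (hQ : ∀ x y : G ⧸ Z, ⁅x ^ (a * q), y⁆ = 1)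
    (hexp : ∀ x : G, x ^ (a * q * q) = 1) (x y : G) : ⁅x ^ (a * q), y⁆ = 1 := by
  have hZq : ∀ z ∈ Z, z ^ q.choose 2 = 1 := fun z hz => by
    obtain ⟨k, hk⟩ := hpq
    rw [hk, pow_mul, hZp z hz, one_pow]
  have hNZ : powSubgroup G (a * q) ≤ Z.upperCentralSeriesStep :=
    powSubgroup_le fun g =>
      (Subgroup.mem_upperCentralSeriesStep Z _).mpr (commutator_mem_of_quotient Z hQ g)
  have hNq : ∀ w ∈ powSubgroup G (a * q), w ^ q = 1 := fun w hw => by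
    refine pow_eq_one_of_mem_closure hZ hZq ?_ (fun u hu v _ => hNZ hu v) hw
    rintro _ ⟨g, rfl⟩
    rw [← pow_mul, hexp]
  have hv : ⁅x ^ a, y⁆ ∈ powSubgroup G (a * q) := commutator_mem_of_quotient _ hN x y
  have hcv : ⁅x ^ a, ⁅x ^ a, y⁆⁆ ∈ Z := by
    rw [← commutatorElement_inv]
    exact Z.inv_mem (hNZ hv _)
  rw [pow_mul, commutator_pow_left_of_mem_center (hZ hcv), hNq _ hv, hZq _ hcv, one_mul]

-- For `p = 2` the inductive step climbs two levels at a time (`q = 4 = p ^ 2`), so the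
-- squares need this separate argument.
theorem commutator_sq_eq_one_of_quotient (Z : Subgroup G) [Z.Normal] (hZ : Z ≤ center G)
    (hZ2 : ∀ z ∈ Z, z ^ 2 = 1) (hcomm : commutator G ≤ powSubgroup G 4)
    (hQ : ∀ x y : G ⧸ Z, ⁅x ^ 2, y⁆ = 1) (hexp : ∀ x : G, x ^ 8 = 1) (x y : G) :
    ⁅x ^ 2, y⁆ = 1 := by
  have h4 : ∀ x y : G, ⁅x ^ (1 * 4), y⁆ = 1 := by
    refine commutator_pow_mul_eq_one_of_quotients Z hZ hZ2 (by decide) ?_ (fun x y => ?_)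
      (fun x => ?_)
    · simpa only [pow_one, one_mul] using commutator_eq_one_of_pow_eq_one
        (commutator_le_powSubgroup_quotient _ hcomm) (pow_eq_one_quotient_powSubgroup 4)
    · rw [one_mul, show 4 = 2 * 2 from rfl, pow_mul]
      exact hQ _ y
    · rw [show 1 * 4 * 4 = 8 * 2 by rfl, pow_mul, hexp, one_pow]
  have hcen : ∀ g : G, g ^ 4 ∈ center G := fun g =>
    mem_center_of_forall_commutator_eq_one (h4 g)
  have hv : ⁅x, y⁆ ∈ powSubgroup G 4 := hcomm (commutator_mem_commutator trivial trivial)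
  have hv2 : ⁅x, y⁆ ^ 2 = 1 := pow_eq_one_of_mem_powSubgroup hcen hexp hv
  have hxv : ⁅x, ⁅x, y⁆⁆ = 1 := commutatorElement_eq_one_iff_mul_comm.mpr
    (mem_center_iff.mp (powSubgroup_le hcen hv) x)
  rw [commutator_pow_left_of_mem_center (hxv ▸ one_mem _), hv2, hxv, one_pow, one_mul]

theorem mul_pow_mul_eq_of_quotient {p a : ℕ} (N : Subgroup G) [N.Normal] (hN : N ≤ center G)
    (hNp : ∀ w ∈ N, w ^ p = 1) (hQ : ∀ x y : G ⧸ N, (x * y) ^ a = x ^ a * y ^ a) {x y : G}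
    (hd : ⁅y ^ a, x ^ a⁆ ∈ center G) (hdp : ⁅y ^ a, x ^ a⁆ ^ p.choose 2 = 1) :
    (x * y) ^ (a * p) = x ^ (a * p) * y ^ (a * p) := by
  have hw : (x ^ a * y ^ a)⁻¹ * (x * y) ^ a ∈ N := QuotientGroup.eq.mp <| by
    simpa only [QuotientGroup.mk_mul, QuotientGroup.mk_pow] using (hQ x y).symm
  calc (x * y) ^ (a * p) = (x ^ a * y ^ a * ((x ^ a * y ^ a)⁻¹ * (x * y) ^ a)) ^ p := by
        rw [pow_mul, mul_inv_cancel_left]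
    _ = (x ^ a * y ^ a) ^ p := by
        rw [(show Commute _ _ from mem_center_iff.mp (hN hw) _).mul_pow, hNp _ hw, mul_one]
    _ = x ^ (a * p) * y ^ (a * p) := by
        rw [mul_pow_of_commutator_mem_center hd, hdp, mul_one, pow_mul, pow_mul]

end central

universe u

theorem IsPGroup.exists_le_center_pow_eq_one {G : Type*} [Group G] [Finite G] [Nontrivial G]
    {p : ℕ} [Fact p.Prime] (hG : IsPGroup p G) :
    ∃ Z : Subgroup G, Z ≤ center G ∧ Z ≠ ⊥ ∧ ∀ z ∈ Z, z ^ p = 1 := by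
  have := hG.center_nontrivial
  obtain ⟨n, hn, hcard⟩ := (hG.to_subgroup (center G)).nontrivial_iff_card.mp this
  obtain ⟨z, hz⟩ := exists_prime_orderOf_dvd_card' (G := center G) p
    (hcard ▸ dvd_pow_self p hn.ne')
  refine ⟨zpowers (z : G), zpowers_le.mpr z.2, ?_, fun w hw => ?_⟩
  · rw [Ne, zpowers_eq_bot, ← orderOf_eq_one_iff, orderOf_submonoid, hz]
    exact (Fact.out : p.Prime).ne_one
  · rw [← orderOf_dvd_iff_pow_eq_one, ← hz, ← orderOf_submonoid]
    exact orderOf_dvd_of_mem_zpowers hw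

theorem IsPGroup.induction_on_central_quotient {p : ℕ} (hp : p.Prime)
    {P : ∀ (G : Type u) [Group G], Prop}
    (subsingleton : ∀ (G : Type u) [Group G] [Subsingleton G], P G)
    (quotient : ∀ (G : Type u) [Group G] [Finite G] (Z : Subgroup G) [Z.Normal], Z ≤ center G →
      (∀ z ∈ Z, z ^ p = 1) → P (G ⧸ Z) → P G)
    (G : Type u) [Group G] [Finite G] (hG : IsPGroup p G) : P G := by
  have := Fact.mk hp
  induction h : Nat.card G using Nat.strong_induction_on generalizing G with
  | _ n ih =>
  cases subsingleton_or_nontrivial G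
  · exact subsingleton G
  obtain ⟨Z, hZc, hZ, hZp⟩ := hG.exists_le_center_pow_eq_one
  have := normal_of_le_center hZc
  refine quotient G Z hZc hZp (ih _ ?_ (G ⧸ Z) (hG.to_quotient Z) rfl)
  rw [← h, Z.card_eq_card_quotient_mul_card_subgroup]
  exact lt_mul_of_one_lt_right Nat.card_pos (Z.one_lt_card_iff_ne_bot.mpr hZ)

theorem Nat.Prime.dvd_choose_two_of_odd {p : ℕ} (hp : p.Prime) (hodd : Odd p) :
    p ∣ p.choose 2 := by
  refine hp.dvd_choose_self two_ne_zero (hp.two_le.lt_of_ne ?_)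
  rintro rfl
  exact Nat.not_odd_iff_even.mpr even_two hodd

theorem commutator_pow_eq_one_of_powerful {p q : ℕ} (hp : p.Prime)
    (hq : Odd p ∧ q = p ∨ p = 2 ∧ q = 4) (n : ℕ) :
    ∀ (G : Type u) [Group G] [Finite G], commutator G ≤ powSubgroup G q →
      (∀ x : G, x ^ (p ^ n * q) = 1) → ∀ x y : G, ⁅x ^ p ^ n, y⁆ = 1 := by
  induction n using Nat.strong_induction_on with
  | _ n ih =>
  intro G _ _ hcomm hexp
  obtain ⟨s, hs⟩ : ∃ s, q = p ^ s := by
    rcases hq with ⟨-, rfl⟩ | ⟨rfl, rfl⟩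
    exacts [⟨1, (pow_one q).symm⟩, ⟨2, rfl⟩]
  have hG : IsPGroup p G := fun g => ⟨n + s, by rw [pow_add, ← hs, hexp]⟩
  have hpq : p ∣ q.choose 2 := by
    rcases hq with ⟨hodd, rfl⟩ | ⟨rfl, rfl⟩
    exacts [hp.dvd_choose_two_of_odd hodd, by decide]
  revert hcomm hexp
  refine IsPGroup.induction_on_central_quotient hp (P := fun G _ =>
    commutator G ≤ powSubgroup G q → (∀ x : G, x ^ (p ^ n * q) = 1) →
      ∀ x y : G, ⁅x ^ p ^ n, y⁆ = 1)
    (fun G _ _ _ _ x y => Subsingleton.elim _ _) (fun G _ _ Z _ hZ hZp hQ hcomm hexp => ?_) G hG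
  have hQ' := hQ (commutator_le_powSubgroup_quotient Z hcomm) (pow_eq_one_quotient Z hexp)
  have hN : ∀ m < n, ∀ x y : G ⧸ powSubgroup G (p ^ m * q), ⁅x ^ p ^ m, y⁆ = 1 := fun m hm =>
    ih m hm (G ⧸ powSubgroup G (p ^ m * q)) (commutator_le_powSubgroup_quotient _ hcomm)
      (pow_eq_one_quotient_powSubgroup _)
  rcases n with _ | n
  · simpa using commutator_eq_one_of_pow_eq_one hcomm (by simpa using hexp)
  rcases hq with ⟨-, rfl⟩ | ⟨rfl, rfl⟩
  · rw [pow_succ] at hQ' hexp ⊢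
    exact commutator_pow_mul_eq_one_of_quotients Z hZ hZp hpq (hN n n.lt_add_one) hQ' hexp
  rcases n with _ | m
  · exact commutator_sq_eq_one_of_quotient Z hZ hZp hcomm hQ' hexp
  rw [show 2 ^ (m + 1 + 1) = 2 ^ m * 4 by ring] at hQ' hexp ⊢
  exact commutator_pow_mul_eq_one_of_quotients Z hZ hZp hpq (hN m (by omega)) hQ' hexp

theorem mul_pow_prime_pow_of_powerful {p q : ℕ} (hp : p.Prime)
    (hq : Odd p ∧ q = p ∨ p = 2 ∧ q = 4) (n : ℕ) :
    ∀ (G : Type u) [Group G] [Finite G], commutator G ≤ powSubgroup G q →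
      (∀ x : G, x ^ p ^ (n + 1) = 1) → ∀ x y : G, (x * y) ^ p ^ n = x ^ p ^ n * y ^ p ^ n := by
  induction n with
  | zero => intro G _ _ _ _ x y; simp
  | succ n ih =>
  intro G _ _ hcomm hexp x y
  have hA := commutator_pow_eq_one_of_powerful hp hq
  have hcen : ∀ g : G, g ^ p ^ (n + 1) ∈ center G := fun g => by
    refine mem_center_of_forall_commutator_eq_one (hA (n + 1) G hcomm (fun x => ?_) g)
    obtain ⟨r, hr⟩ : p ∣ q := by rcases hq with ⟨-, rfl⟩ | ⟨rfl, rfl⟩ <;> norm_num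
    rw [hr, ← mul_assoc, ← pow_succ, pow_mul, hexp, one_pow]
  set N := powSubgroup G (p ^ (n + 1))
  have hNp : ∀ w ∈ N, w ^ p = 1 := fun w hw =>
    pow_eq_one_of_mem_powSubgroup hcen (fun g => by rw [← pow_succ, hexp]) hw
  have hQ := ih (G ⧸ N) (commutator_le_powSubgroup_quotient N hcomm)
    (pow_eq_one_quotient_powSubgroup _)
  obtain ⟨hd, hdp⟩ : ⁅y ^ p ^ n, x ^ p ^ n⁆ ∈ center G ∧
      ⁅y ^ p ^ n, x ^ p ^ n⁆ ^ p.choose 2 = 1 := by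
    rcases hq with ⟨hodd, hqp⟩ | ⟨rfl, rfl⟩
    · subst q
      have hdN : ⁅y ^ p ^ n, x ^ p ^ n⁆ ∈ N := commutator_mem_of_quotient N
        (hA n (G ⧸ N) (commutator_le_powSubgroup_quotient N hcomm)
          (by rw [← pow_succ]; exact pow_eq_one_quotient_powSubgroup _)) y (x ^ p ^ n)
      obtain ⟨k, hk⟩ := hp.dvd_choose_two_of_odd hodd
      exact ⟨powSubgroup_le hcen hdN, by rw [hk, pow_mul, hNp _ hdN, one_pow]⟩
    · have hd : ⁅y ^ 2 ^ n, x ^ 2 ^ n⁆ = 1 :=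
        hA n G hcomm (fun g => by rw [show 2 ^ n * 4 = 2 ^ (n + 1 + 1) by ring, hexp]) y
          (x ^ 2 ^ n)
      exact ⟨hd ▸ one_mem _, by rw [hd, one_pow]⟩
  rw [pow_succ]
  exact mul_pow_mul_eq_of_quotient N (powSubgroup_le hcen) hNp hQ hd hdp

theorem pow_prime_pow_pred_eq_one_iff {M : Type*} [Monoid M] {x : M} {p e : ℕ} (hp : p.Prime)
    (he : 1 ≤ e) (hx : orderOf x ∣ p ^ e) : x ^ p ^ (e - 1) = 1 ↔ orderOf x < p ^ e := by
  obtain ⟨j, -, hj⟩ := (Nat.dvd_prime_pow hp).mp hx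
  rw [← orderOf_dvd_iff_pow_eq_one, hj, Nat.pow_dvd_pow_iff_le_right hp.one_lt,
    Nat.pow_lt_pow_iff_right hp.one_lt]
  omega

theorem stmt_2_general (p e : ℕ) (hp : p.Prime) (G : Type*) [Group G] [Finite G]
    (he : 1 ≤ e) (hexp : Monoid.exponent G = p ^ e)
    (hpowerful : (Odd p → commutator G ≤ powSubgroup G p) ∧
      (p = 2 → commutator G ≤ powSubgroup G 4)) :
    (∀ x y : G, (x * y) ^ p ^ (e - 1) = x ^ p ^ (e - 1) * y ^ p ^ (e - 1)) ∧
    ∃ K : Subgroup G, K.Normal ∧ (K : Set G) = {x : G | orderOf x < p ^ e} ∧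
      commutator G ≤ K := by
  obtain ⟨q, hq, hcomm⟩ : ∃ q, (Odd p ∧ q = p ∨ p = 2 ∧ q = 4) ∧
      commutator G ≤ powSubgroup G q := by
    rcases hp.eq_two_or_odd' with rfl | hodd
    exacts [⟨4, Or.inr ⟨rfl, rfl⟩, hpowerful.2 rfl⟩, ⟨p, Or.inl ⟨hodd, rfl⟩, hpowerful.1 hodd⟩]
  have hpow : ∀ x : G, x ^ p ^ (e - 1 + 1) = 1 := fun x => by
    rw [Nat.sub_add_cancel he, ← hexp, Monoid.pow_exponent_eq_one]
  have hmul := mul_pow_prime_pow_of_powerful hp hq (e - 1) G hcomm hpow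
  let φ : G →* G := MonoidHom.mk' (· ^ p ^ (e - 1)) hmul
  refine ⟨hmul, φ.ker, φ.normal_ker, ?_, hcomm.trans (powSubgroup_le fun g => ?_)⟩
  · ext x
    exact pow_prime_pow_pred_eq_one_iff hp he (hexp ▸ Monoid.order_dvd_exponent x)
  · obtain ⟨r, hr⟩ : p ∣ q := by rcases hq with ⟨-, rfl⟩ | ⟨rfl, rfl⟩ <;> norm_num
    rw [MonoidHom.mem_ker, MonoidHom.mk'_apply, hr, ← pow_mul, mul_right_comm, pow_mul,
      ← pow_succ', hpow, one_pow]

theorem stmt_2 (p e : ℕ) (hp : p.Prime) (G : Type*) [Group G] [Finite G]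
    (hG : IsPGroup p G) (he : 1 ≤ e) (hexp : Monoid.exponent G = p ^ e)
    (hpowerful : (Odd p → commutator G ≤ powSubgroup G p) ∧
      (p = 2 → commutator G ≤ powSubgroup G 4)) :
    (∀ x y : G, (x * y) ^ p ^ (e - 1) = x ^ p ^ (e - 1) * y ^ p ^ (e - 1)) ∧
    ∃ K : Subgroup G, K.Normal ∧ (K : Set G) = {x : G | orderOf x < p ^ e} ∧
      commutator G ≤ K :=
  stmt_2_general p e hp G he hexp hpowerful
end

section
/- Let p be a prime and G a finite p-group of GK type with GK kernel K. Then: (i) every x ∈ G \ K has order equal to exp(G); (ii) for every x ∈ G \ K, the subgroup generated by x together with K is all of G; (iii) exp(K) = exp(G)/p; (iv) |K| · exp(G) = |G| · exp(K), i.e. G and K have the same cyclic deficiency log_p(|G|/exp(G)). -/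
/-!
Take `x ∉ K`. Then `x` has order `exp G`, and in a `p`-group `x ^ p` has order `exp G / p`,
so it lies in `K`. Every element of `K` has order a proper divisor of the `p`-power `exp G`,
hence dividing `exp G / p`; therefore `exp K = exp G / p`. Being cut out by an order condition,
`K` is normal, and the image of `x` generates `G ⧸ K` because `K` is maximal; as that image has
order `p`, `|G| = p · |K|`.
-/

namespace Subgroup

variable {G : Type*} [Group G] {K : Subgroup G}

theorem normal_of_forall_mem_iff_orderOf {P : ℕ → Prop} (hK : ∀ x, x ∈ K ↔ P (orderOf x)) :
    K.Normal where
  conj_mem n hn g := by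
    rw [hK] at hn ⊢
    rwa [← MulAut.conj_apply, MulEquiv.orderOf_eq]

theorem zpowers_sup_eq_top_of_isCoatom (hK : IsCoatom K) {x : G} (hx : x ∉ K) :
    zpowers x ⊔ K = ⊤ :=
  hK.lt_iff.mp <| SetLike.lt_iff_le_and_exists.mpr
    ⟨le_sup_right, x, mem_sup_left (mem_zpowers x), hx⟩

theorem index_eq_prime_of_isCoatom {p : ℕ} [Fact p.Prime] [K.Normal] (hK : IsCoatom K) {x : G}
    (hx : x ∉ K) (hxp : x ^ p ∈ K) : K.index = p := by
  have hgen : ∀ q : G ⧸ K, q ∈ zpowers (x : G ⧸ K) := by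
    have htop : comap (QuotientGroup.mk' K) (zpowers (x : G ⧸ K)) = ⊤ := by
      rw [eq_top_iff, ← zpowers_sup_eq_top_of_isCoatom hK hx]
      refine sup_le (zpowers_le.mpr (mem_zpowers _)) ?_
      simpa only [QuotientGroup.ker_mk'] using
        (QuotientGroup.mk' K).ker_le_comap (zpowers (x : G ⧸ K))
    rintro ⟨g⟩
    exact (htop ▸ mem_top g : g ∈ comap (QuotientGroup.mk' K) _)
  have horder : orderOf (x : G ⧸ K) = p :=
    orderOf_eq_prime ((QuotientGroup.eq_one_iff _).mpr hxp) (mt (QuotientGroup.eq_one_iff x).mp hx)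
  rw [index_eq_card, ← orderOf_eq_card_of_forall_mem_zpowers hgen, horder]

end Subgroup

theorem Nat.dvd_div_prime_of_dvd_prime_pow_of_lt {p n k : ℕ} (hp : p.Prime) (hdvd : n ∣ p ^ k)
    (hlt : n < p ^ k) : n ∣ p ^ k / p := by
  obtain ⟨m, -, rfl⟩ := (Nat.dvd_prime_pow hp).mp hdvd
  have hmk : m < k := (Nat.pow_lt_pow_iff_right hp.one_lt).mp hlt
  obtain ⟨j, rfl⟩ : ∃ j, k = j + 1 := ⟨k - 1, by omega⟩
  rw [pow_succ, Nat.mul_div_cancel _ hp.pos]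
  exact Nat.pow_dvd_pow p (by omega)

theorem IsPGroup.orderOf_pow_mul_eq {p : ℕ} [hp : Fact p.Prime] {G : Type*} [Group G]
    (hG : IsPGroup p G) {x : G} (hx : x ≠ 1) : orderOf (x ^ p) * p = orderOf x := by
  obtain ⟨n, hn⟩ := IsPGroup.iff_orderOf.mp hG x
  have hn0 : n ≠ 0 := by
    rintro rfl
    exact hx (orderOf_eq_one_iff.mp (hn.trans (pow_zero p)))
  have hdvd : p ∣ orderOf x := hn ▸ dvd_pow_self p hn0
  rw [orderOf_pow_of_dvd hp.out.ne_zero hdvd, Nat.div_mul_cancel hdvd]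

section GKKernel

variable {G : Type*} [Group G] [Finite G] {K : Subgroup G} {p : ℕ} [hp : Fact p.Prime] {x : G}

theorem orderOf_eq_exponent_of_notMem
    (hK : ∀ x, x ∈ K ↔ orderOf x < Monoid.exponent G) (hx : x ∉ K) :
    orderOf x = Monoid.exponent G :=
  (Monoid.orderOf_le_exponent .of_finite x).antisymm (not_lt.mp ((hK x).not.mp hx))

theorem orderOf_pow_prime_mul_eq_exponent
    (hK : ∀ x, x ∈ K ↔ orderOf x < Monoid.exponent G) (hG : IsPGroup p G) (hx : x ∉ K) :
    orderOf (x ^ p) * p = Monoid.exponent G := by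
  rw [hG.orderOf_pow_mul_eq (ne_of_mem_of_not_mem K.one_mem hx).symm,
    orderOf_eq_exponent_of_notMem hK hx]

theorem pow_prime_mem_of_notMem
    (hK : ∀ x, x ∈ K ↔ orderOf x < Monoid.exponent G) (hG : IsPGroup p G) (hx : x ∉ K) :
    x ^ p ∈ K := by
  rw [hK, ← orderOf_pow_prime_mul_eq_exponent hK hG hx]
  exact lt_mul_right (orderOf_pos _) hp.out.one_lt

theorem exponent_eq_orderOf_pow_prime
    (hK : ∀ x, x ∈ K ↔ orderOf x < Monoid.exponent G) (hG : IsPGroup p G) (hx : x ∉ K) :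
    Monoid.exponent K = orderOf (x ^ p) := by
  have hxp := pow_prime_mem_of_notMem hK hG hx
  refine Nat.dvd_antisymm (Monoid.exponent_dvd.mpr fun y => ?_) ?_
  · obtain ⟨k, hk⟩ := isPGroup_iff_exponent_eq_pow.mp hG
    rw [← Subgroup.orderOf_coe, Nat.eq_div_of_mul_eq_left hp.out.ne_zero
      (orderOf_pow_prime_mul_eq_exponent hK hG hx), hk]
    exact Nat.dvd_div_prime_of_dvd_prime_pow_of_lt hp.out (hk ▸ Monoid.order_dvd_exponent _)
      (hk ▸ (hK y).mp y.2)
  · exact Subgroup.orderOf_mk _ hxp ▸ Monoid.order_dvd_exponent _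

end GKKernel

theorem stmt_3 (p : ℕ) (hp : p.Prime) (G : Type*) [Group G] [Finite G]
    (hG : IsPGroup p G) (K : Subgroup G) (hco : IsCoatom K)
    (hKset : (K : Set G) = {x : G | orderOf x < Monoid.exponent G}) :
    (∀ x : G, x ∉ K → orderOf x = Monoid.exponent G) ∧
    (∀ x : G, x ∉ K → Subgroup.zpowers x ⊔ K = ⊤) ∧
    Monoid.exponent K = Monoid.exponent G / p ∧
    Nat.card K * Monoid.exponent G = Nat.card G * Monoid.exponent K := by
  have := Fact.mk hp
  have hK : ∀ x, x ∈ K ↔ orderOf x < Monoid.exponent G := Set.ext_iff.mp hKset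
  have := Subgroup.normal_of_forall_mem_iff_orderOf (P := (· < Monoid.exponent G)) hK
  obtain ⟨x, -, hx⟩ := SetLike.exists_of_lt hco.lt_top
  have hexpG := orderOf_pow_prime_mul_eq_exponent hK hG hx
  have hexpK := exponent_eq_orderOf_pow_prime hK hG hx
  have hcard : Nat.card K * p = Nat.card G := by
    rw [← Subgroup.card_mul_index K,
      Subgroup.index_eq_prime_of_isCoatom hco hx (pow_prime_mem_of_notMem hK hG hx)]
  refine ⟨fun y => orderOf_eq_exponent_of_notMem hK,
    fun y => Subgroup.zpowers_sup_eq_top_of_isCoatom hco, ?_, ?_⟩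
  · rw [hexpK, ← hexpG, Nat.mul_div_cancel _ hp.pos]
  · rw [hexpK, ← hexpG, ← hcard]
    ring
end

section
/- Let p be a prime and G a finite p-group of GK type with GK kernel K, and suppose that K is itself of GK type. Then for every x ∈ G \ K the element x^p lies in K but not in the Frattini subgroup Φ(K) of K, and consequently the rank of G is at most the rank of K. -/
/-!
An element `x ∉ K` has order `exp G = p ^ (e + 1)`, so `x ^ p` lies in `K` with order `p ^ e`, while
every element of `K` has order dividing `p ^ e`. Thus `x ^ p` has maximal order in `K`, so it avoids
the GK kernel of `K`, a maximal subgroup containing `Φ(K)`.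

For the rank, `K ⧸ Φ(K)` is a vector space over `𝔽_p` of dimension at most `rank K`, in which
the image of `x ^ p` is nonzero. Completing it to a basis and lifting gives a generating set of `K`
with at most `rank K` elements, one of which is `x ^ p`; replacing `x ^ p` by `x` yields a
generating set of `G`, since `K` is maximal and `x ∉ K`.
-/

open Module Subgroup Submodule
open scoped commutatorElement IsMulCommutative

theorem exists_finset_card_add_one_eq_finrank_span_insert_eq_top {k V : Type*} [DivisionRing k]
    [AddCommGroup V] [Module k V] [FiniteDimensional k V] {w : V} (hw : w ≠ 0) :
    ∃ t : Finset V, t.card + 1 = finrank k V ∧ span k (insert w (t : Set V)) = ⊤ := by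
  classical
  have hli : LinearIndepOn k id ({w} : Set V) := (linearIndepOn_singleton_iff k).mpr hw
  let b := Basis.extend hli
  have hwB : w ∈ hli.extend (Set.subset_univ _) := hli.subset_extend _ rfl
  have : Fintype (hli.extend (Set.subset_univ _)) := FiniteDimensional.fintypeBasisIndex b
  refine ⟨(hli.extend (Set.subset_univ _)).toFinset.erase w, ?_, ?_⟩
  · rw [Finset.card_erase_add_one (Set.mem_toFinset.mpr hwB), finrank_eq_card_basis b,
      Set.toFinset_card]
  · rw [Finset.coe_erase, Set.coe_toFinset, Set.insert_sdiff_singleton,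
      Set.insert_eq_of_mem hwB, hli.span_extend_eq_span, span_univ]

theorem Subgroup.closure_eq_top_iff_span_zmod_eq_top {Q : Type*} [CommGroup Q] {n : ℕ}
    [Module (ZMod n) (Additive Q)] {t : Set Q} :
    closure t = ⊤ ↔ span (ZMod n) (Additive.ofMul '' t) = ⊤ := by
  rw [Additive.ofMul.image_eq_preimage_symm, ← restrictScalars_eq_top_iff ℤ,
    restrictScalars_span ℤ (ZMod n) ZMod.intCast_surjective, ← toAddSubgroup_inj,
    span_int_eq_addSubgroupClosure, Additive.ofMul_symm_eq, ← toAddSubgroup_closure,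
    top_toAddSubgroup, ← OrderIso.map_top Subgroup.toAddSubgroup,
    Subgroup.toAddSubgroup.injective.eq_iff]

theorem Subgroup.exists_closure_insert_eq_top_of_pow_eq_one {p : ℕ} [Fact p.Prime] {Q : Type*}
    [Group Q] [IsMulCommutative Q] [Finite Q] (hQ : ∀ q : Q, q ^ p = 1) {w : Q} (hw : w ≠ 1)
    {s : Finset Q} (hs : closure (s : Set Q) = ⊤) :
    ∃ t : Finset Q, t.card + 1 ≤ s.card ∧ closure (insert w (t : Set Q)) = ⊤ := by
  classical
  -- Only the existence of the vector space structure matters, so it is introduced by `have`.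
  have : Module (ZMod p) (Additive Q) := AddCommGroup.zmodModule fun x => hQ x.toMul
  have : FiniteDimensional (ZMod p) (Additive Q) := Module.Finite.of_finite
  obtain ⟨t, ht, hspan⟩ := exists_finset_card_add_one_eq_finrank_span_insert_eq_top
    (k := ZMod p) (w := Additive.ofMul w) hw
  have hfinrank : finrank (ZMod p) (Additive Q) ≤ s.card := by
    have := finrank_span_finset_le_card (R := ZMod p) (s.image Additive.ofMul)
    rw [Set.finrank, Finset.coe_image, closure_eq_top_iff_span_zmod_eq_top.mp hs,
      finrank_top] at this
    exact this.trans Finset.card_image_le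
  refine ⟨t.image Additive.toMul, ?_, ?_⟩
  · exact (Nat.add_le_add_right Finset.card_image_le 1).trans (ht ▸ hfinrank)
  · rw [closure_eq_top_iff_span_zmod_eq_top (n := p)]
    simpa [Set.image_insert_eq, Set.image_image] using hspan

theorem mem_frattini_iff {G : Type*} [Group G] {x : G} :
    x ∈ frattini G ↔ ∀ M : Subgroup G, IsCoatom M → x ∈ M := by
  simp [frattini, Order.radical, Subgroup.mem_iInf]

theorem Subgroup.closure_eq_top_iff_closure_image_mk_frattini {G : Type*} [Group G]
    [IsCoatomic (Subgroup G)] {s : Set G} :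
    closure s = ⊤ ↔ closure (QuotientGroup.mk' (frattini G) '' s) = ⊤ := by
  rw [← MonoidHom.map_closure]
  refine ⟨fun h => ?_, fun h => frattini_nongenerating ?_⟩
  · rw [h, ← MonoidHom.range_eq_map, MonoidHom.range_eq_top]
    exact QuotientGroup.mk'_surjective _
  · rw [← QuotientGroup.ker_mk' (frattini G), ← comap_map_eq, h, comap_top]

namespace IsPGroup

variable {p : ℕ} [hp : Fact p.Prime] {G : Type*} [Group G] [Finite G] (hG : IsPGroup p G)
include hG

theorem normal_of_isCoatom {M : Subgroup G} (hM : IsCoatom M) : M.Normal :=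
  have := hG.isNilpotent
  NormalizerCondition.normal_of_coatom M Group.normalizerCondition_of_isNilpotent hM

theorem index_eq_of_isCoatom_s4 {M : Subgroup G} (hM : IsCoatom M) : M.index = p := by
  obtain ⟨m, hm⟩ := IsPGroup.iff_card.mp (hG.to_subgroup M)
  obtain ⟨k, hk⟩ := hG.index M
  have hk0 : k ≠ 0 := by
    rintro rfl
    exact hM.1 (index_eq_one.mp (by simpa using hk))
  have hdvd : p ^ (m + 1) ∣ Nat.card G := by
    rw [← M.card_mul_index, hm, hk, ← pow_add]
    exact pow_dvd_pow p (by omega)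
  obtain ⟨L, hL, hML⟩ := Sylow.exists_subgroup_card_pow_succ hdvd hm
  have hML' : M ≠ L := by
    rintro rfl
    exact (Nat.pow_lt_pow_succ hp.out.one_lt).ne (hm.symm.trans hL)
  rw [hM.2 L (hML.lt_of_ne hML'), card_top, pow_succ, ← M.card_mul_index, hm] at hL
  exact Nat.eq_of_mul_eq_mul_left (hm ▸ Nat.card_pos) hL

theorem pow_mem_of_isCoatom {M : Subgroup G} (hM : IsCoatom M) (a : G) : a ^ p ∈ M :=
  have := hG.normal_of_isCoatom hM
  hG.index_eq_of_isCoatom_s4 hM ▸ M.pow_index_mem a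

theorem commutatorElement_mem_of_isCoatom {M : Subgroup G} (hM : IsCoatom M) (a b : G) :
    ⁅a, b⁆ ∈ M := by
  have := hG.normal_of_isCoatom hM
  have : IsCyclic (G ⧸ M) :=
    isCyclic_of_prime_card (by rw [← index_eq_card, hG.index_eq_of_isCoatom_s4 hM])
  let := IsCyclic.commGroup (α := G ⧸ M)
  rw [← QuotientGroup.eq_one_iff, ← QuotientGroup.mk'_apply, map_commutatorElement]
  exact commutatorElement_eq_one_iff_mul_comm.mpr (mul_comm _ _)

theorem pow_mem_frattini (a : G) : a ^ p ∈ frattini G :=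
  mem_frattini_iff.mpr fun _ hM => hG.pow_mem_of_isCoatom hM a

theorem isMulCommutative_quotient_frattini : IsMulCommutative (G ⧸ frattini G) := by
  refine isMulCommutative_iff.mpr fun a b => ?_
  induction a using QuotientGroup.induction_on with | H a =>
  induction b using QuotientGroup.induction_on with | H b =>
  rw [← commutatorElement_eq_one_iff_mul_comm, ← QuotientGroup.mk'_apply,
    ← QuotientGroup.mk'_apply, ← map_commutatorElement, QuotientGroup.mk'_apply,
    QuotientGroup.eq_one_iff]
  exact mem_frattini_iff.mpr fun _ hM => hG.commutatorElement_mem_of_isCoatom hM a b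

theorem exists_closure_insert_eq_top_of_notMem_frattini {y : G} (hy : y ∉ frattini G) :
    ∃ T : Finset G, T.card + 1 ≤ Group.rank G ∧ closure (insert y (T : Set G)) = ⊤ := by
  classical
  have := hG.isMulCommutative_quotient_frattini
  obtain ⟨S, hScard, hS⟩ := Group.rank_spec G
  obtain ⟨t, ht, hgen⟩ := Subgroup.exists_closure_insert_eq_top_of_pow_eq_one
    (fun q => by
      induction q using QuotientGroup.induction_on with | H a =>
      rw [← QuotientGroup.mk_pow, QuotientGroup.eq_one_iff]
      exact hG.pow_mem_frattini a)
    (w := QuotientGroup.mk' (frattini G) y)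
    (by rwa [QuotientGroup.mk'_apply, Ne, QuotientGroup.eq_one_iff])
    (s := S.image (QuotientGroup.mk' (frattini G)))
    (by rwa [Finset.coe_image, ← closure_eq_top_iff_closure_image_mk_frattini])
  refine ⟨t.image Quotient.out, ?_, ?_⟩
  · calc (t.image Quotient.out).card + 1 ≤ t.card + 1 := by grw [Finset.card_image_le]
      _ ≤ (S.image (QuotientGroup.mk' (frattini G))).card := ht
      _ ≤ Group.rank G := hScard ▸ Finset.card_image_le
  · rw [closure_eq_top_iff_closure_image_mk_frattini, Set.image_insert_eq, Finset.coe_image,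
      Set.image_image]
    simpa only [QuotientGroup.mk'_apply, QuotientGroup.out_eq', Set.image_id'] using hgen

theorem orderOf_dvd_exponent_div_of_lt {g : G} (hg : orderOf g < Monoid.exponent G) :
    orderOf g ∣ Monoid.exponent G / p := by
  obtain ⟨e, he⟩ := hG.exists_exponent_eq_pow
  obtain ⟨i, -, hi⟩ := (Nat.dvd_prime_pow hp.out).mp (he ▸ Monoid.order_dvd_exponent g)
  rw [hi, he] at hg ⊢
  obtain ⟨k, rfl⟩ := Nat.exists_eq_add_of_lt ((Nat.pow_lt_pow_iff_right hp.out.one_lt).mp hg)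
  rw [pow_succ, Nat.mul_div_cancel _ hp.out.pos]
  exact pow_dvd_pow p (Nat.le_add_right i k)

theorem exists_pow_mem_orderOf_eq_exponent {K : Subgroup G}
    (hK : (K : Set G) = {x : G | orderOf x < Monoid.exponent G}) {x : G} (hx : x ∉ K) :
    ∃ hxp : x ^ p ∈ K, orderOf (⟨x ^ p, hxp⟩ : K) = Monoid.exponent K := by
  have hmem (y : G) : y ∈ K ↔ orderOf y < Monoid.exponent G := by
    rw [← SetLike.mem_coe, hK, Set.mem_ofPred_eq]
  have hexp_pos := Monoid.exponent_pos_of_exists (n := Nat.card G) Nat.card_pos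
    fun g => pow_card_eq_one'
  have hx_ord : orderOf x = Monoid.exponent G :=
    (Nat.le_of_dvd hexp_pos (Monoid.order_dvd_exponent x)).antisymm
      (not_lt.mp ((hmem x).not.mp hx))
  have hp_dvd : p ∣ orderOf x := by
    obtain ⟨e, he⟩ := hG.exists_exponent_eq_pow
    have h1 : 1 < Monoid.exponent G := by simpa using (hmem 1).mp K.one_mem
    rw [hx_ord, he]
    exact dvd_pow_self p (by rintro rfl; simp [he] at h1)
  have hxp_ord : orderOf (x ^ p) = Monoid.exponent G / p := by
    rw [orderOf_pow_of_dvd hp.out.ne_zero hp_dvd, hx_ord]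
  have hxp : x ^ p ∈ K := (hmem _).mpr (hxp_ord ▸ Nat.div_lt_self hexp_pos hp.out.one_lt)
  refine ⟨hxp, Nat.dvd_antisymm (Monoid.order_dvd_exponent _)
    (Monoid.exponent_dvd.mpr fun k => ?_)⟩
  rw [orderOf_mk (x ^ p) hxp, hxp_ord, ← orderOf_coe]
  exact hG.orderOf_dvd_exponent_div_of_lt ((hmem k).mp k.2)

end IsPGroup

theorem Subgroup.rank_le_rank_of_isCoatom {p : ℕ} [Fact p.Prime] {G : Type*} [Group G]
    [Finite G] {K : Subgroup G} (hK : IsCoatom K) (hKp : IsPGroup p K) {x : G} (hx : x ∉ K)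
    {n : ℕ} (hxn : x ^ n ∈ K) (hxΦ : (⟨x ^ n, hxn⟩ : K) ∉ frattini K) :
    Group.rank G ≤ Group.rank K := by
  classical
  obtain ⟨T, hTcard, hT⟩ := hKp.exists_closure_insert_eq_top_of_notMem_frattini hxΦ
  set S : Finset G := insert x (T.image Subtype.val)
  have hxS : x ∈ closure (S : Set G) := subset_closure (Finset.mem_insert_self _ _)
  have hKS : K ≤ closure (S : Set G) :=
    calc K = (closure (insert ⟨x ^ n, hxn⟩ (T : Set K))).map K.subtype := by
          rw [hT, ← MonoidHom.range_eq_map, range_subtype]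
      _ = closure (insert (x ^ n) (Subtype.val '' (T : Set K))) := by
          rw [MonoidHom.map_closure, Set.image_insert_eq]; rfl
      _ ≤ closure (S : Set G) := by
          refine closure_le _ |>.mpr (Set.insert_subset (pow_mem hxS n) ?_)
          rw [← Finset.coe_image]
          exact (Finset.coe_subset.mpr (Finset.subset_insert _ _)).trans subset_closure
  have hS : closure (S : Set G) = ⊤ := hK.2 _ (hKS.lt_of_ne fun h => hx (h ▸ hxS))
  calc Group.rank G ≤ S.card := Group.rank_le hS
    _ ≤ T.card + 1 := (Finset.card_insert_le _ _).trans (by grw [Finset.card_image_le])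
    _ ≤ Group.rank K := hTcard

theorem stmt_4 (p : ℕ) (hp : p.Prime) (G : Type*) [Group G] [Finite G]
    (hG : IsPGroup p G) (K : Subgroup G) (hco : IsCoatom K)
    (hKset : (K : Set G) = {x : G | orderOf x < Monoid.exponent G})
    (hKGK : ∃ K' : Subgroup K, IsCoatom K' ∧
      (K' : Set K) = {x : K | orderOf x < Monoid.exponent K}) :
    (∀ x : G, x ∉ K → ∃ hxp : x ^ p ∈ K, (⟨x ^ p, hxp⟩ : K) ∉ frattini K) ∧
    Group.rank G ≤ Group.rank K := by
  have := Fact.mk hp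
  obtain ⟨K', hK'co, hK'⟩ := hKGK
  have hxΦ (x : G) (hx : x ∉ K) : ∃ hxp : x ^ p ∈ K, (⟨x ^ p, hxp⟩ : K) ∉ frattini K := by
    obtain ⟨hxp, hord⟩ := hG.exists_pow_mem_orderOf_eq_exponent hKset hx
    refine ⟨hxp, fun h => ?_⟩
    have hK'mem : (⟨x ^ p, hxp⟩ : K) ∈ (K' : Set K) := frattini_le_coatom hK'co h
    rw [hK'] at hK'mem
    exact hK'mem.ne hord
  obtain ⟨x, hx⟩ := SetLike.exists_not_mem_of_ne_top K hco.1
  obtain ⟨hxp, hxpΦ⟩ := hxΦ x hx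
  exact ⟨hxΦ, rank_le_rank_of_isCoatom hco (hG.to_subgroup K) hx hxp hxpΦ⟩
end

section
/- Let p be a prime and G a nontrivial finite abelian p-group. Then the set 𝒦(G) := {x ∈ G : orderOf x < exp(G)} is a subgroup of G, and G is of GK type (i.e. 𝒦(G) has index p in G) if and only if G is isomorphic to a direct product H × C, where C is cyclic of order exp(G) and H is an abelian p-group with exp(H) < exp(G). -/
/-! If `exponent G = p ^ (E + 1)`, then `𝒦(G)` is the kernel of `x ↦ x ^ p ^ E`. For
`G ≃* H × C` with `C` cyclic of order `p ^ (E + 1)`, the index of this kernel is its index in `H`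
times `p`, so it is `p` exactly when `H` is killed by `p ^ E`, i.e. when `exponent H < exponent G`.
A finite abelian `p`-group always splits off a cyclic factor of order its exponent, since one of
its invariants `p ^ eᵢ` is the exponent. -/

open Monoid

theorem pow_dvd_pow_iff_lt_pow_succ {p k E : ℕ} (hp : 1 < p) :
    p ^ k ∣ p ^ E ↔ p ^ k < p ^ (E + 1) := by
  rw [Nat.pow_dvd_pow_iff_le_right hp, Nat.pow_lt_pow_iff_right hp]
  omega

theorem Finset.exists_eq_of_lcm_eq_prime_pow {ι : Type*} {s : Finset ι} {f : ι → ℕ}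
    {p E : ℕ} (hp : p.Prime) (h : s.lcm f = p ^ (E + 1)) : ∃ i ∈ s, f i = p ^ (E + 1) := by
  by_contra! hne
  have hdvd : s.lcm f ∣ p ^ E := Finset.lcm_dvd fun i hi => by
    obtain ⟨k, hk, hfi⟩ := (Nat.dvd_prime_pow hp).mp (h ▸ Finset.dvd_lcm hi)
    have hne' := hne i hi
    rw [hfi] at hne' ⊢
    exact pow_dvd_pow p (by grind)
  rw [h, Nat.pow_dvd_pow_iff_le_right hp.one_lt] at hdvd
  omega

theorem orderOf_lt_exponent_iff_pow_eq_one {G : Type*} [Monoid G] {p E : ℕ} (hp : p.Prime)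
    (hexp : exponent G = p ^ (E + 1)) (x : G) : orderOf x < exponent G ↔ x ^ p ^ E = 1 := by
  obtain ⟨k, -, hk⟩ := (Nat.dvd_prime_pow hp).mp (hexp ▸ order_dvd_exponent x)
  rw [← orderOf_dvd_iff_pow_eq_one, hexp, hk, pow_dvd_pow_iff_lt_pow_succ hp.one_lt]

theorem IsPGroup.exists_exponent_eq_pow_succ {p : ℕ} [Fact p.Prime] {G : Type*} [Group G]
    [Finite G] [Nontrivial G] (hG : IsPGroup p G) : ∃ E, exponent G = p ^ (E + 1) := by
  obtain ⟨_ | E, hE⟩ := hG.exists_exponent_eq_pow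
  · exact absurd (hE ▸ one_lt_exponent (G := G)) (by simp)
  · exact ⟨E, hE⟩

def MulEquiv.piSplitAt {ι : Type*} [DecidableEq ι] (i : ι) (M : ι → Type*) [∀ j, Mul (M j)] :
    (∀ j, M j) ≃* M i × (∀ j : {j // j ≠ i}, M j) :=
  { Equiv.piSplitAt i M with map_mul' := fun _ _ => rfl }

theorem IsPGroup.exists_mulEquiv_prod_multiplicative_zmod_exponent {p : ℕ} [Fact p.Prime]
    {G : Type*} [CommGroup G] [Finite G] [Nontrivial G] (hG : IsPGroup p G) :
    ∃ (H : Type) (_ : CommGroup H) (_ : Finite H),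
      Nonempty (G ≃* H × Multiplicative (ZMod (exponent G))) := by
  classical
  obtain ⟨ι, _, n, hn, ⟨e⟩⟩ := CommGroup.equiv_prod_multiplicative_zmod_of_finite G
  have : ∀ i, NeZero (n i) := fun i => ⟨(zero_lt_one.trans (hn i)).ne'⟩
  obtain ⟨E, hE⟩ := hG.exists_exponent_eq_pow_succ
  have hlcm : Finset.univ.lcm n = exponent G := by
    simp [exponent_eq_of_mulEquiv e, exponent_pi, exponent_multiplicative, ZMod.exponent]
  obtain ⟨i, -, hi⟩ := Finset.exists_eq_of_lcm_eq_prime_pow Fact.out (hlcm.trans hE)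
  refine ⟨∀ j : {j // j ≠ i}, Multiplicative (ZMod (n j)), inferInstance, inferInstance, ?_⟩
  rw [hE, ← hi]
  exact ⟨e.trans ((MulEquiv.piSplitAt i _).trans MulEquiv.prodComm)⟩

theorem index_ker_powMonoidHom_of_mulEquiv_prod {G H C : Type*} [CommGroup G] [CommGroup H]
    [CommGroup C] [IsCyclic C] [Finite C] (f : G ≃* H × C) (n : ℕ) :
    (powMonoidHom n : G →* G).ker.index =
      (powMonoidHom n : H →* H).ker.index * (Nat.card C / (Nat.card C).gcd n) := by
  have hG : (powMonoidHom n : G →* G).ker = (powMonoidHom n : H × C →* H × C).ker.comap f := by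
    ext x
    simp [← map_pow]
  have hprod : (powMonoidHom n : H × C →* H × C).ker =
      (powMonoidHom n : H →* H).ker.prod (powMonoidHom n : C →* C).ker := by
    ext ⟨h, c⟩
    simp [Prod.ext_iff, Subgroup.mem_prod]
  rw [hG, Subgroup.index_comap_of_surjective _ f.surjective, hprod, Subgroup.index_prod,
    IsCyclic.index_powMonoidHom_ker (G := C)]

theorem index_ker_powMonoidHom_eq_one_iff {H : Type*} [CommGroup H] (n : ℕ) :
    (powMonoidHom n : H →* H).ker.index = 1 ↔ exponent H ∣ n := by
  rw [Subgroup.index_eq_one, exponent_dvd_iff_forall_pow_eq_one, eq_top_iff]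
  simp [SetLike.le_def]

theorem index_ker_powMonoidHom_eq_prime_iff {G H : Type*} [CommGroup G] [CommGroup H]
    {p E : ℕ} (hp : p.Prime) (f : G ≃* H × Multiplicative (ZMod (p ^ (E + 1)))) :
    (powMonoidHom (p ^ E) : G →* G).ker.index = p ↔ exponent H ∣ p ^ E := by
  have : NeZero p := ⟨hp.ne_zero⟩
  have hcyc : Nat.card (Multiplicative (ZMod (p ^ (E + 1)))) /
      (Nat.card (Multiplicative (ZMod (p ^ (E + 1))))).gcd (p ^ E) = p := by
    rw [Nat.card_congr Multiplicative.toAdd, Nat.card_zmod,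
      Nat.gcd_eq_right (pow_dvd_pow p E.le_succ), pow_succ,
      Nat.mul_div_cancel_left _ (pow_pos hp.pos E)]
  rw [index_ker_powMonoidHom_of_mulEquiv_prod f, hcyc, ← index_ker_powMonoidHom_eq_one_iff]
  exact Nat.mul_eq_right hp.ne_zero

theorem stmt_5 (p : ℕ) (hp : p.Prime) (G : Type) [CommGroup G] [Finite G] [Nontrivial G]
    (hG : IsPGroup p G) :
    (∃ K : Subgroup G, (K : Set G) = {x : G | orderOf x < Monoid.exponent G}) ∧
    ((∃ K : Subgroup G, K.index = p ∧
        (K : Set G) = {x : G | orderOf x < Monoid.exponent G}) ↔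
      ∃ (H : Type) (_ : CommGroup H) (_ : Finite H), IsPGroup p H ∧
        Monoid.exponent H < Monoid.exponent G ∧
        Nonempty (G ≃* H × Multiplicative (ZMod (Monoid.exponent G)))) := by
  have := Fact.mk hp
  obtain ⟨E, hexp⟩ := hG.exists_exponent_eq_pow_succ
  have hK : ((powMonoidHom (p ^ E) : G →* G).ker : Set G) = {x | orderOf x < exponent G} := by
    ext x
    exact (orderOf_lt_exponent_iff_pow_eq_one hp hexp x).symm
  have hGK : (∃ K : Subgroup G, K.index = p ∧ (K : Set G) = {x | orderOf x < exponent G}) ↔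
      (powMonoidHom (p ^ E) : G →* G).ker.index = p := by
    rw [← hK]
    exact ⟨fun ⟨K, hKp, hKeq⟩ => SetLike.coe_injective hKeq ▸ hKp, fun h => ⟨_, h, rfl⟩⟩
  refine ⟨⟨_, hK⟩, hGK.trans ⟨fun hidx => ?_, ?_⟩⟩
  · obtain ⟨H, _, _, ⟨f⟩⟩ := hG.exists_mulEquiv_prod_multiplicative_zmod_exponent
    have hHG : exponent H ∣ p ^ E := by
      rw [hexp] at f
      exact (index_ker_powMonoidHom_eq_prime_iff hp f).mp hidx
    refine ⟨H, inferInstance, inferInstance,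
      hG.of_injective (f.symm.toMonoidHom.comp (MonoidHom.inl _ _))
        (f.symm.injective.comp (Prod.mk_left_injective 1)), ?_, ⟨f⟩⟩
    rw [hexp]
    exact (Nat.le_of_dvd (pow_pos hp.pos E) hHG).trans_lt (Nat.pow_lt_pow_succ hp.one_lt)
  · rintro ⟨H, _, _, hH, hlt, ⟨f⟩⟩
    obtain ⟨k, hk⟩ := hH.exists_exponent_eq_pow
    rw [hexp] at f hlt
    rw [index_ker_powMonoidHom_eq_prime_iff hp f, hk, pow_dvd_pow_iff_lt_pow_succ hp.one_lt]
    exact hk ▸ hlt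
end

section
/- Let G be a finite group, H a normal subgroup with G/H cyclic of order d, and g ∈ G such that G is generated by g together with H. Let k be the smallest positive integer such that the conjugation automorphism of H induced by g^k is an inner automorphism of H. Then: k divides d; the subgroup T generated by g^k together with H is normal in G with [G : T] = k and T/H cyclic of order d/k; T is a trivial extension of H, i.e. there exists y ∈ H such that g^k·y⁻¹ centralizes H; and G is a faithful extension of T, i.e. for every integer j, if conjugation by g^j induces an inner automorphism of T then k divides j. -/
/-!
Conjugation by `x` restricts to an inner automorphism of `H` exactly when `x ∈ C_G(H) ⊔ H`.
So the exponents `m` for which `g ^ m` induces an inner automorphism of `H` are those with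
`g ^ m` in that subgroup, and they are the multiples of the least positive one, `k`. Since
`g ^ d ∈ H`, this gives `k ∣ d`. Also `T = ⟨g ^ k⟩ ⊔ H` lies in `C_G(H) ⊔ H`, and
`C_G(T) ≤ C_G(H)`, so if `g ^ j` induces an inner automorphism of `T` then `g ^ j` lies in
`C_G(H) ⊔ H`, and `k ∣ j`. Finally `G ⧸ H` is cyclic of order `d` with generator the image
of `g`, so the image of `T` is the subgroup generated by the `k`-th power of that generator,
which has index `k`.
-/

open Subgroup

section Conjugation

variable {G : Type*} [Group G] {H : Subgroup G}

theorem mul_inv_mem_centralizer_of_conj_eq {x y : G}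
    (h : ∀ z ∈ H, x⁻¹ * z * x = y⁻¹ * z * y) : x * y⁻¹ ∈ centralizer H := by
  rw [mem_centralizer_iff]
  intro z hz
  have hxy : x * (y⁻¹ * z * y) * x⁻¹ = z := by rw [← h z hz]; group
  calc z * (x * y⁻¹) = x * (y⁻¹ * z * y) * x⁻¹ * (x * y⁻¹) := by rw [hxy]
    _ = x * y⁻¹ * z := by group

theorem mem_centralizer_sup_of_conj_eq {x : G}
    (h : ∃ y ∈ H, ∀ z ∈ H, x⁻¹ * z * x = y⁻¹ * z * y) : x ∈ centralizer H ⊔ H := by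
  obtain ⟨y, hy, hconj⟩ := h
  have := mul_mem (mem_sup_left (mul_inv_mem_centralizer_of_conj_eq hconj))
    (mem_sup_right hy : y ∈ centralizer H ⊔ H)
  rwa [inv_mul_cancel_right] at this

theorem exists_conj_eq_of_mem_centralizer_sup [H.Normal] {x : G}
    (hx : x ∈ centralizer H ⊔ H) : ∃ y ∈ H, ∀ z ∈ H, x⁻¹ * z * x = y⁻¹ * z * y := by
  obtain ⟨c, hc, y, hy, rfl⟩ := mem_sup_of_normal_right.mp hx
  refine ⟨y, hy, fun z hz => ?_⟩
  have hcz : c⁻¹ * z * c = z := by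
    rw [mul_assoc, mem_centralizer_iff.mp hc z hz]; group
  calc (c * y)⁻¹ * z * (c * y) = y⁻¹ * (c⁻¹ * z * c) * y := by group
    _ = y⁻¹ * z * y := by rw [hcz]

theorem centralizer_sup_le_centralizer_sup {T : Subgroup G} (hHT : H ≤ T)
    (hT : T ≤ centralizer H ⊔ H) : centralizer T ⊔ T ≤ centralizer H ⊔ H :=
  sup_le ((centralizer_le (SetLike.coe_subset_coe.mpr hHT)).trans le_sup_left) hT

end Conjugation

theorem dvd_of_zpow_mem_of_minimal {G : Type*} [Group G] {K : Subgroup G} {g : G} {k : ℕ}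
    (hk : 0 < k) (hgk : g ^ k ∈ K) (hmin : ∀ m : ℕ, 0 < m → g ^ m ∈ K → k ≤ m)
    {j : ℤ} (hj : g ^ j ∈ K) : (k : ℤ) ∣ j := by
  have hrem : g ^ (j % k) ∈ K := by
    rw [Int.emod_def, zpow_sub, zpow_mul, zpow_natCast]
    exact mul_mem hj (inv_mem (zpow_mem hgk _))
  have hlt : j % k < k := Int.emod_lt_of_pos j (by exact_mod_cast hk)
  have hnonneg : 0 ≤ j % k := Int.emod_nonneg j (by exact_mod_cast hk.ne')
  by_contra hndvd
  have hpos : 0 < j % k := lt_of_le_of_ne hnonneg (Ne.symm (mt Int.dvd_of_emod_eq_zero hndvd))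
  have := hmin (j % k).toNat (by omega) (by rwa [← zpow_natCast, Int.toNat_of_nonneg hnonneg])
  omega

theorem index_zpowers_pow {Q : Type*} [Group Q] [Finite Q] {x : Q} (hx : zpowers x = ⊤)
    {k : ℕ} (hk : k ∣ Nat.card Q) : (zpowers (x ^ k)).index = k := by
  have hord : orderOf x = Nat.card Q := by
    rw [← Nat.card_zpowers, hx, card_top]
  have hpos : 0 < Nat.card Q / k :=
    Nat.div_pos (Nat.le_of_dvd Nat.card_pos hk) (Nat.pos_of_dvd_of_pos hk Nat.card_pos)
  have hmul := card_mul_index (zpowers (x ^ k))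
  rw [Nat.card_zpowers, orderOf_pow, hord, Nat.gcd_eq_right hk] at hmul
  exact Nat.eq_of_mul_eq_mul_left hpos (by rw [hmul, Nat.div_mul_cancel hk])

section QuotientByNormal

variable {G : Type*} [Group G] (N : Subgroup G) [N.Normal] (x : G)

theorem map_mk'_zpowers_sup : (zpowers x ⊔ N).map (QuotientGroup.mk' N) =
    zpowers (QuotientGroup.mk' N x) := by
  rw [Subgroup.map_sup, QuotientGroup.map_mk'_self, sup_bot_eq, MonoidHom.map_zpowers]

theorem normal_of_le_of_isCyclic_quotient [IsCyclic (G ⧸ N)] {T : Subgroup G} (hNT : N ≤ T) :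
    T.Normal := by
  let := IsCyclic.commGroup (α := G ⧸ N)
  rw [← comap_map_eq_self (f := QuotientGroup.mk' N) (H := T) (by simpa using hNT)]
  exact (normal_of_isMulCommutative _).comap _

theorem isCyclic_quotient_zpowers_sup :
    IsCyclic ((zpowers x ⊔ N : Subgroup G) ⧸ N.subgroupOf (zpowers x ⊔ N)) :=
  isCyclic_of_surjective
    ((QuotientGroup.quotientInfEquivProdNormalQuotient (zpowers x) N).toMonoidHom.comp
      (QuotientGroup.mk' _))
    ((QuotientGroup.quotientInfEquivProdNormalQuotient (zpowers x) N).surjective.comp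
      (QuotientGroup.mk'_surjective _))

theorem index_zpowers_pow_sup [Finite (G ⧸ N)] (hgen : zpowers x ⊔ N = ⊤) {k : ℕ}
    (hk : k ∣ N.index) : (zpowers (x ^ k) ⊔ N).index = k := by
  have hgen' : zpowers (QuotientGroup.mk' N x) = ⊤ := by
    rw [← map_mk'_zpowers_sup, hgen, map_top_of_surjective _ (QuotientGroup.mk'_surjective N)]
  rw [← (zpowers (x ^ k) ⊔ N).index_map_eq (QuotientGroup.mk'_surjective N) (by simp),
    map_mk'_zpowers_sup, map_pow, index_zpowers_pow hgen' hk]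

end QuotientByNormal

theorem stmt_6 (G : Type*) [Group G] [Finite G] (H : Subgroup G) [H.Normal]
    (d : ℕ) (hcyc : IsCyclic (G ⧸ H)) (hd : H.index = d)
    (g : G) (hgen : Subgroup.zpowers g ⊔ H = ⊤)
    (k : ℕ) (hk : 0 < k)
    (hinner : ∃ y ∈ H, ∀ z ∈ H, (g ^ k)⁻¹ * z * g ^ k = y⁻¹ * z * y)
    (hmin : ∀ m : ℕ, 0 < m →
      (∃ y ∈ H, ∀ z ∈ H, (g ^ m)⁻¹ * z * g ^ m = y⁻¹ * z * y) → k ≤ m) :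
    k ∣ d ∧
    ∀ T : Subgroup G, T = Subgroup.zpowers (g ^ k) ⊔ H →
      T.Normal ∧ T.index = k ∧
      IsCyclic (T ⧸ H.subgroupOf T) ∧ Nat.card (T ⧸ H.subgroupOf T) = d / k ∧
      (∃ y ∈ H, ∀ z ∈ H, (g ^ k * y⁻¹) * z = z * (g ^ k * y⁻¹)) ∧
      (∀ j : ℤ, (∃ y ∈ T, ∀ z ∈ T, (g ^ j)⁻¹ * z * g ^ j = y⁻¹ * z * y) →
        (k : ℤ) ∣ j) := by
  have hgk : g ^ k ∈ centralizer H ⊔ H := mem_centralizer_sup_of_conj_eq hinner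
  have hdvd : ∀ j : ℤ, g ^ j ∈ centralizer H ⊔ H → (k : ℤ) ∣ j :=
    fun j => dvd_of_zpow_mem_of_minimal hk hgk
      fun m hm hgm => hmin m hm (exists_conj_eq_of_mem_centralizer_sup hgm)
  have hkd : k ∣ d := by
    exact_mod_cast hdvd d (by simpa [hd] using mem_sup_right (H.pow_index_mem g))
  refine ⟨hkd, ?_⟩
  rintro T rfl
  have hHT : H ≤ zpowers (g ^ k) ⊔ H := le_sup_right
  have hTk : (zpowers (g ^ k) ⊔ H).index = k := index_zpowers_pow_sup H g hgen (hd ▸ hkd)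
  refine ⟨normal_of_le_of_isCyclic_quotient H hHT, hTk, isCyclic_quotient_zpowers_sup H _,
    ?_, ?_, ?_⟩
  · have hrel := relIndex_mul_index hHT
    rw [hTk, hd] at hrel
    exact (Nat.div_eq_of_eq_mul_left hk hrel.symm).symm
  · obtain ⟨y, hy, hconj⟩ := hinner
    exact ⟨y, hy, fun z hz =>
      (mem_centralizer_iff.mp (mul_inv_mem_centralizer_of_conj_eq hconj) z hz).symm⟩
  · intro j hj
    refine hdvd j (centralizer_sup_le_centralizer_sup hHT ?_ (mem_centralizer_sup_of_conj_eq hj))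
    exact sup_le (zpowers_le.mpr hgk) le_sup_right
end

section
/- Let G be a finite group, H a normal subgroup of G, and g ∈ G centralizing H such that G is generated by g together with H; let d := [G : H] and h := g^d. Then h lies in the center Z(H) of H, the order of g equals d·|h|, and G is isomorphic to the quotient of the direct product Ĝ := C × H, where C is cyclic of order d·|h| with generator ĝ, by the cyclic central subgroup generated by (ĝ^d, h⁻¹). -/
/-!
Since `G = ⟨g⟩H`, the quotient `G ⧸ H` is cyclic, generated by the image of `g`, whose order is
therefore `d = [G : H]`; hence `g ^ k ∈ H` exactly when `d ∣ k`. In particular `h = g ^ d ∈ H`, and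
`d` divides the order of `g`, so `orderOf g = d * orderOf h`. As `g` centralizes `H`, the map
`(ĝ ^ k, x) ↦ g ^ k * x` is a homomorphism `C × H → G`; it is onto because its image contains `g`
and `H`. An element `(ĝ ^ k, x)` lies in its kernel iff `x = g⁻ᵏ`, which forces `g ^ k ∈ H`, i.e.
`k = d * j`, and then the element is `(ĝ ^ d, h⁻¹) ^ j`.
-/

open Subgroup

lemma orderOf_eq_mul_orderOf_pow_of_dvd {G : Type*} [Monoid G] {x : G} {n : ℕ}
    (hn : n ∣ orderOf x) : orderOf x = n * orderOf (x ^ n) := by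
  rcases eq_or_ne n 0 with rfl | hn₀
  · simpa using hn
  · rw [orderOf_pow_of_dvd hn₀ hn, Nat.mul_div_cancel' hn]

section ZModPowHom

variable {G : Type*} [Group G]

def zmodPowHom (g : G) {n : ℕ} (hn : g ^ n = 1) : Multiplicative (ZMod n) →* G :=
  AddMonoidHom.toMultiplicativeLeft <|
    ZMod.lift n ⟨zmultiplesHom (Additive G) (Additive.ofMul g), by simp [← ofMul_pow, hn]⟩

variable {g : G} {n : ℕ} {hn : g ^ n = 1}

@[simp]
lemma zmodPowHom_ofAdd_intCast (k : ℤ) :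
    zmodPowHom g hn (Multiplicative.ofAdd (k : ZMod n)) = g ^ k := by
  simp [zmodPowHom]

@[simp]
lemma zmodPowHom_ofAdd_natCast (m : ℕ) :
    zmodPowHom g hn (Multiplicative.ofAdd (m : ZMod n)) = g ^ m := by
  simpa using zmodPowHom_ofAdd_intCast (hn := hn) m

@[simp]
lemma zmodPowHom_ofAdd_one : zmodPowHom g hn (Multiplicative.ofAdd 1) = g := by
  simpa using zmodPowHom_ofAdd_natCast (hn := hn) 1

lemma commute_zmodPowHom {y : G} (hy : Commute g y) (a : Multiplicative (ZMod n)) :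
    Commute (zmodPowHom g hn a) y := by
  obtain ⟨k, hk⟩ := ZMod.intCast_surjective (Multiplicative.toAdd a)
  rw [← ofAdd_toAdd a, ← hk, zmodPowHom_ofAdd_intCast]
  exact hy.zpow_left k

end ZModPowHom

section TrivialExtension

variable {G : Type*} [Group G] {H : Subgroup G} {g : G}

lemma orderOf_mk_eq_index [H.Normal] (hgen : zpowers g ⊔ H = ⊤) :
    orderOf (g : G ⧸ H) = H.index := by
  have htop : zpowers (g : G ⧸ H) = ⊤ := by
    simpa [Subgroup.map_sup, MonoidHom.map_zpowers,
      map_top_of_surjective _ (QuotientGroup.mk'_surjective H)]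
      using congrArg (map (QuotientGroup.mk' H)) hgen
  rw [← Nat.card_zpowers, htop, card_top, index_eq_card]

lemma zpow_mem_iff_index_dvd [H.Normal] (hgen : zpowers g ⊔ H = ⊤) {k : ℤ} :
    g ^ k ∈ H ↔ (H.index : ℤ) ∣ k := by
  rw [← orderOf_mk_eq_index hgen, orderOf_dvd_iff_zpow_eq_one, ← QuotientGroup.mk_zpow,
    QuotientGroup.eq_one_iff]

def parentHom (hcen : ∀ x ∈ H, Commute g x) {n : ℕ} (hn : g ^ n = 1) :
    Multiplicative (ZMod n) × H →* G :=
  (zmodPowHom g hn).noncommCoprod H.subtype fun a x => commute_zmodPowHom (hcen x x.2) a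

variable {n : ℕ} (hcen : ∀ x ∈ H, Commute g x) (hn : g ^ n = 1)

@[simp]
lemma parentHom_apply (a : Multiplicative (ZMod n)) (x : H) :
    parentHom hcen hn (a, x) = zmodPowHom g hn a * x :=
  rfl

lemma parentHom_surjective (hgen : zpowers g ⊔ H = ⊤) :
    Function.Surjective (parentHom hcen hn) := by
  rw [← MonoidHom.range_eq_top, eq_top_iff, ← hgen]
  refine sup_le (zpowers_le.2 ⟨(Multiplicative.ofAdd 1, 1), ?_⟩) fun x hx => ⟨(1, ⟨x, hx⟩), ?_⟩
  <;> simp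

lemma ker_parentHom [H.Normal] (hgen : zpowers g ⊔ H = ⊤) :
    (parentHom hcen hn).ker = zpowers ((Multiplicative.ofAdd (1 : ZMod n)) ^ H.index,
      (⟨g ^ H.index, H.pow_index_mem g⟩ : H)⁻¹) := by
  refine le_antisymm ?_ ?_
  · rintro ⟨a, x⟩ hax
    obtain ⟨k, hk⟩ := ZMod.intCast_surjective (Multiplicative.toAdd a)
    rw [← ofAdd_toAdd a, ← hk] at hax ⊢
    have hx : (x : G) = (g ^ k)⁻¹ := eq_inv_of_mul_eq_one_right (by simpa using hax)
    obtain ⟨j, rfl⟩ : (H.index : ℤ) ∣ k := by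
      rw [← zpow_mem_iff_index_dvd hgen, ← inv_mem_iff, ← hx]
      exact x.2
    refine ⟨j, Prod.ext ?_ (Subtype.ext ?_)⟩
    · simp [← ofAdd_nsmul, ← ofAdd_zsmul, mul_comm]
    · simp [hx, zpow_mul]
  · simp [zpowers_le]

end TrivialExtension

theorem stmt_11_general (G : Type*) [Group G] (H : Subgroup G) [H.Normal]
    (g : G) (hcen : ∀ x ∈ H, g * x = x * g)
    (hgen : Subgroup.zpowers g ⊔ H = ⊤)
    (d : ℕ) (hd : d = H.index) (h : G) (hh : h = g ^ d) :
    ∃ hmem : h ∈ H, (∀ x ∈ H, x * h = h * x) ∧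
      orderOf g = d * orderOf h ∧
      ∃ φ : (Multiplicative (ZMod (d * orderOf h)) × H) →* G,
        Function.Surjective φ ∧
        φ.ker = Subgroup.zpowers
          ((Multiplicative.ofAdd (1 : ZMod (d * orderOf h))) ^ d, (⟨h, hmem⟩ : H)⁻¹) := by
  subst hd hh
  have horder : orderOf g = H.index * orderOf (g ^ H.index) :=
    orderOf_eq_mul_orderOf_pow_of_dvd <|
      orderOf_mk_eq_index hgen ▸ orderOf_map_dvd (QuotientGroup.mk' H) g
  have hn : g ^ (H.index * orderOf (g ^ H.index)) = 1 := horder ▸ pow_orderOf_eq_one g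
  exact ⟨H.pow_index_mem g, fun x hx => (Commute.pow_left (hcen x hx) _).symm, horder,
    parentHom hcen hn, parentHom_surjective hcen hn hgen, ker_parentHom hcen hn hgen⟩

theorem stmt_11 (G : Type*) [Group G] [Finite G] (H : Subgroup G) [H.Normal]
    (g : G) (hcen : ∀ x ∈ H, g * x = x * g)
    (hgen : Subgroup.zpowers g ⊔ H = ⊤)
    (d : ℕ) (hd : d = H.index) (h : G) (hh : h = g ^ d) :
    ∃ hmem : h ∈ H, (∀ x ∈ H, x * h = h * x) ∧
      orderOf g = d * orderOf h ∧
      ∃ φ : (Multiplicative (ZMod (d * orderOf h)) × H) →* G,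
        Function.Surjective φ ∧
        φ.ker = Subgroup.zpowers
          ((Multiplicative.ofAdd (1 : ZMod (d * orderOf h))) ^ d, (⟨h, hmem⟩ : H)⁻¹) :=
  stmt_11_general G H g hcen hgen d hd h hh
end

section
/- Let H be a finite group, h an element of the center Z(H), and d ≥ 1. Let Ĝ := C × H, where C is cyclic of order d·|h| with generator ĝ, and let K := ⟨(ĝ^d, h⁻¹)⟩ ≤ Ĝ. Then K is a central cyclic subgroup of Ĝ of order |h|; the composite map H → Ĝ → Ĝ/K is injective with normal image; the image of ĝ in Ĝ/K centralizes the image of H, generates Ĝ/K together with it, satisfies (image of ĝ)^d = image of h, and the quotient of Ĝ/K by the image of H is cyclic of order d. Thus Ĝ/K is a trivial extension of H of degree d. -/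
/-!
Write `c = ĝ ^ d`, which has the same order as `h`. The generator `(c, h⁻¹)` of `K` is central, and
`(c, h⁻¹) ^ k = (1, a)` forces `|h| ∣ k`, hence `a = 1`: so `H` embeds in `Ĝ/K`. The projection
`Ĝ → C → ℤ/d` kills `K`, and its kernel `⟨c⟩ × H` equals `K · H`; hence it descends to a surjection
`Ĝ/K → ℤ/d` whose kernel is the image of `H`, which is therefore normal of index `d`.
-/

open Subgroup QuotientGroup

section CentralAmalgam

variable {G H : Type*} [Group G] [Group H]

theorem Subgroup.comap_fst_zpowers (c : G) (h : H) :
    (zpowers c).comap (MonoidHom.fst G H) = zpowers (c, h⁻¹) ⊔ (MonoidHom.inr G H).range := by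
  refine le_antisymm ?_ (sup_le ?_ ?_)
  · rintro ⟨x, a⟩ hx
    obtain ⟨k, rfl⟩ := mem_zpowers_iff.mp hx
    have hsplit : ((c ^ k, a) : G × H) = (c, h⁻¹) ^ k * (1, h ^ k * a) := by
      ext <;> simp
    rw [hsplit]
    exact mul_mem (mem_sup_left (zpow_mem_zpowers _ k)) (mem_sup_right ⟨_, rfl⟩)
  · exact zpowers_le.mpr (mem_zpowers c)
  · rintro _ ⟨a, rfl⟩
    exact mem_comap.mpr (one_mem (zpowers c))

theorem injective_mk_comp_inr_of_orderOf_dvd {c : G} {h : H} (hch : orderOf h ∣ orderOf c)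
    [(zpowers (c, h⁻¹)).Normal] :
    Function.Injective ((mk' (zpowers (c, h⁻¹))).comp (MonoidHom.inr G H)) := by
  rw [injective_iff_map_eq_one]
  intro a ha
  obtain ⟨k, hk⟩ := mem_zpowers_iff.mp ((eq_one_iff _).mp ha)
  have hck : (orderOf c : ℤ) ∣ k := orderOf_dvd_iff_zpow_eq_one.mpr (congrArg Prod.fst hk)
  have hhk : h⁻¹ ^ k = 1 :=
    orderOf_dvd_iff_zpow_eq_one.mp
      ((orderOf_inv h).symm ▸ (Int.natCast_dvd_natCast.mpr hch).trans hck)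
  exact (congrArg Prod.snd hk).symm.trans hhk

theorem zpowers_mk_inl_sup_range_mk_comp_inr {g : G} (hg : zpowers g = ⊤) (N : Subgroup (G × H))
    [N.Normal] : zpowers (mk' N (g, 1)) ⊔ ((mk' N).comp (MonoidHom.inr G H)).range = ⊤ := by
  refine eq_top_iff.mpr fun q _ => ?_
  induction q using QuotientGroup.induction_on with
  | H p =>
    obtain ⟨x, a⟩ := p
    obtain ⟨k, rfl⟩ := mem_zpowers_iff.mp (hg ▸ mem_top x : x ∈ zpowers g)
    have hsplit : ((g ^ k, a) : G × H) = (g, 1) ^ k * (1, a) := by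
      ext <;> simp
    rw [← mk'_apply, hsplit, map_mul, map_zpow]
    exact mul_mem (mem_sup_left (zpow_mem_zpowers _ k)) (mem_sup_right ⟨a, rfl⟩)

theorem mk_pow_eq_mk_comp_inr (g : G) (h : H) (n : ℕ) [(zpowers (g ^ n, h⁻¹)).Normal] :
    mk' (zpowers (g ^ n, h⁻¹)) (g, 1) ^ n = ((mk' _).comp (MonoidHom.inr G H)) h := by
  rw [← map_pow, MonoidHom.comp_apply, mk'_apply, mk'_apply, QuotientGroup.eq]
  convert inv_mem (mem_zpowers (g ^ n, h⁻¹)) using 1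
  ext <;> simp

theorem exists_surjective_ker_eq_range_mk_comp_inr {Q : Type*} [Group Q] {c : G} (φ : G →* Q)
    (hφ : Function.Surjective φ) (hker : φ.ker = zpowers c) (h : H) [(zpowers (c, h⁻¹)).Normal] :
    ∃ ψ : ((G × H) ⧸ zpowers (c, h⁻¹)) →* Q,
      Function.Surjective ψ ∧ ψ.ker = ((mk' _).comp (MonoidHom.inr G H)).range := by
  have hle : zpowers (c, h⁻¹) ≤ (φ.comp (MonoidHom.fst G H)).ker :=
    zpowers_le.mpr (hker.ge (mem_zpowers c))
  have hsurj : Function.Surjective (φ.comp (MonoidHom.fst G H)) := hφ.comp Prod.fst_surjective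
  refine ⟨lift _ _ hle, lift_surjective_of_surjective _ _ hsurj hle, ?_⟩
  rw [ker_lift, ← MonoidHom.comap_ker, hker, comap_fst_zpowers c h, Subgroup.map_sup, map_mk'_self,
    bot_sup_eq, MonoidHom.range_comp]

end CentralAmalgam

theorem ZMod.ofAdd_one_zpow {n : ℕ} (k : ℤ) :
    Multiplicative.ofAdd (1 : ZMod n) ^ k = Multiplicative.ofAdd (k : ZMod n) := by
  rw [← ofAdd_zsmul, zsmul_one]

theorem ZMod.zpowers_ofAdd_one (n : ℕ) : zpowers (Multiplicative.ofAdd (1 : ZMod n)) = ⊤ := by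
  refine eq_top_iff.mpr fun x _ => ?_
  obtain ⟨k, hk⟩ := ZMod.intCast_surjective (Multiplicative.toAdd x)
  exact ⟨k, (ZMod.ofAdd_one_zpow k).trans (by rw [hk, ofAdd_toAdd])⟩

theorem ZMod.ker_toMultiplicative_castHom (d m : ℕ) :
    (AddMonoidHom.toMultiplicative (ZMod.castHom (dvd_mul_right d m) (ZMod d)).toAddMonoidHom).ker =
      zpowers (Multiplicative.ofAdd (1 : ZMod (d * m)) ^ d) := by
  have hgen (j : ℤ) : (Multiplicative.ofAdd (1 : ZMod (d * m)) ^ d) ^ j =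
      Multiplicative.ofAdd ((d * j : ℤ) : ZMod (d * m)) := by
    rw [← zpow_natCast, ← zpow_mul, ZMod.ofAdd_one_zpow]
  ext x
  obtain ⟨k, hk⟩ := ZMod.intCast_surjective (Multiplicative.toAdd x)
  rw [← ofAdd_toAdd x, ← hk, MonoidHom.mem_ker, mem_zpowers_iff]
  simp only [hgen, AddMonoidHom.toMultiplicative_apply_apply, toAdd_ofAdd,
    RingHom.toAddMonoidHom_eq_coe, AddMonoidHom.coe_coe, map_intCast, ofAdd_eq_one,
    ZMod.intCast_zmod_eq_zero_iff_dvd]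
  constructor
  · rintro ⟨j, rfl⟩
    exact ⟨j, rfl⟩
  · rintro ⟨j, hj⟩
    rw [← ZMod.intCast_zmod_eq_zero_iff_dvd]
    simpa using (congrArg (fun y =>
      ZMod.castHom (dvd_mul_right d m) (ZMod d) (Multiplicative.toAdd y)) hj).symm

theorem ZMod.orderOf_ofAdd_one_pow {d : ℕ} (hd : d ≠ 0) (m : ℕ) :
    orderOf (Multiplicative.ofAdd (1 : ZMod (d * m)) ^ d) = m := by
  have hg : orderOf (Multiplicative.ofAdd (1 : ZMod (d * m))) = d * m := by
    rw [orderOf_ofAdd_eq_addOrderOf, ZMod.addOrderOf_one]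
  rw [orderOf_pow_of_dvd hd (hg.symm ▸ dvd_mul_right d m), hg,
    Nat.mul_div_cancel_left _ (Nat.pos_of_ne_zero hd)]

theorem stmt_12_general (H : Type*) [Group H] (h : H) (hh : h ∈ Subgroup.center H)
    (d : ℕ) (hd : 1 ≤ d)
    (K : Subgroup (Multiplicative (ZMod (d * orderOf h)) × H))
    (hK : K = Subgroup.zpowers
      ((Multiplicative.ofAdd (1 : ZMod (d * orderOf h))) ^ d, h⁻¹))
    [K.Normal] :
    K ≤ Subgroup.center (Multiplicative (ZMod (d * orderOf h)) × H) ∧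
    IsCyclic K ∧ Nat.card K = orderOf h ∧
    Function.Injective
      ((QuotientGroup.mk' K).comp (MonoidHom.inr (Multiplicative (ZMod (d * orderOf h))) H)) ∧
    (((QuotientGroup.mk' K).comp
      (MonoidHom.inr (Multiplicative (ZMod (d * orderOf h))) H)).range).Normal ∧
    (∀ x ∈ ((QuotientGroup.mk' K).comp
        (MonoidHom.inr (Multiplicative (ZMod (d * orderOf h))) H)).range,
      QuotientGroup.mk' K (Multiplicative.ofAdd (1 : ZMod (d * orderOf h)), 1) * x =
        x * QuotientGroup.mk' K (Multiplicative.ofAdd (1 : ZMod (d * orderOf h)), 1)) ∧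
    Subgroup.zpowers (QuotientGroup.mk' K (Multiplicative.ofAdd (1 : ZMod (d * orderOf h)), 1)) ⊔
      ((QuotientGroup.mk' K).comp
        (MonoidHom.inr (Multiplicative (ZMod (d * orderOf h))) H)).range = ⊤ ∧
    (QuotientGroup.mk' K (Multiplicative.ofAdd (1 : ZMod (d * orderOf h)), 1)) ^ d =
      ((QuotientGroup.mk' K).comp
        (MonoidHom.inr (Multiplicative (ZMod (d * orderOf h))) H)) h ∧
    ∃ ψ : ((Multiplicative (ZMod (d * orderOf h)) × H) ⧸ K) →* Multiplicative (ZMod d),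
      Function.Surjective ψ ∧
      ψ.ker = ((QuotientGroup.mk' K).comp
        (MonoidHom.inr (Multiplicative (ZMod (d * orderOf h))) H)).range := by
  subst hK
  set g := Multiplicative.ofAdd (1 : ZMod (d * orderOf h))
  have hgd : orderOf (g ^ d) = orderOf h := ZMod.orderOf_ofAdd_one_pow (by omega) _
  obtain ⟨ψ, hψ, hker⟩ := exists_surjective_ker_eq_range_mk_comp_inr _
    (ZMod.castHom_surjective (dvd_mul_right d (orderOf h)))
    (ZMod.ker_toMultiplicative_castHom d _) h
  refine ⟨zpowers_le.mpr ?_, inferInstance, ?_,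
    injective_mk_comp_inr_of_orderOf_dvd (dvd_of_eq hgd.symm), hker ▸ ψ.normal_ker, ?_,
    zpowers_mk_inl_sup_range_mk_comp_inr (ZMod.zpowers_ofAdd_one _) _,
    mk_pow_eq_mk_comp_inr g h d, ψ, hψ, hker⟩
  · rw [Subgroup.center_prod]
    exact ⟨Subgroup.mem_center_iff.mpr fun x => mul_comm x _, Subgroup.inv_mem _ hh⟩
  · rw [Nat.card_zpowers, Prod.orderOf, hgd, orderOf_inv, Nat.lcm_self]
  · rintro _ ⟨a, rfl⟩
    exact ((MonoidHom.commute_inl_inr g a).map _).eq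

theorem stmt_12 (H : Type*) [Group H] [Finite H] (h : H) (hh : h ∈ Subgroup.center H)
    (d : ℕ) (hd : 1 ≤ d)
    (K : Subgroup (Multiplicative (ZMod (d * orderOf h)) × H))
    (hK : K = Subgroup.zpowers
      ((Multiplicative.ofAdd (1 : ZMod (d * orderOf h))) ^ d, h⁻¹))
    [K.Normal] :
    K ≤ Subgroup.center (Multiplicative (ZMod (d * orderOf h)) × H) ∧
    IsCyclic K ∧ Nat.card K = orderOf h ∧
    Function.Injective
      ((QuotientGroup.mk' K).comp (MonoidHom.inr (Multiplicative (ZMod (d * orderOf h))) H)) ∧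
    (((QuotientGroup.mk' K).comp
      (MonoidHom.inr (Multiplicative (ZMod (d * orderOf h))) H)).range).Normal ∧
    (∀ x ∈ ((QuotientGroup.mk' K).comp
        (MonoidHom.inr (Multiplicative (ZMod (d * orderOf h))) H)).range,
      QuotientGroup.mk' K (Multiplicative.ofAdd (1 : ZMod (d * orderOf h)), 1) * x =
        x * QuotientGroup.mk' K (Multiplicative.ofAdd (1 : ZMod (d * orderOf h)), 1)) ∧
    Subgroup.zpowers (QuotientGroup.mk' K (Multiplicative.ofAdd (1 : ZMod (d * orderOf h)), 1)) ⊔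
      ((QuotientGroup.mk' K).comp
        (MonoidHom.inr (Multiplicative (ZMod (d * orderOf h))) H)).range = ⊤ ∧
    (QuotientGroup.mk' K (Multiplicative.ofAdd (1 : ZMod (d * orderOf h)), 1)) ^ d =
      ((QuotientGroup.mk' K).comp
        (MonoidHom.inr (Multiplicative (ZMod (d * orderOf h))) H)) h ∧
    ∃ ψ : ((Multiplicative (ZMod (d * orderOf h)) × H) ⧸ K) →* Multiplicative (ZMod d),
      Function.Surjective ψ ∧
      ψ.ker = ((QuotientGroup.mk' K).comp
        (MonoidHom.inr (Multiplicative (ZMod (d * orderOf h))) H)).range :=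
  stmt_12_general H h hh d hd K hK
end

section
/- For every l ≥ 2, the dihedral group of order 2^(l+2) and the generalized quaternion group of order 2^(l+2) are not of GK type: in each case the set of elements of non-maximal order (elements of order strictly less than the exponent 2^(l+1)) is not the underlying set of any maximal subgroup. -/
/-! In both groups every element outside the cyclic subgroup of index two has order 2 or 4, which
is not maximal once the group has order at least 16, yet two such elements multiply to a generator
of the cyclic subgroup. So the elements of non-maximal order are not closed under multiplication. -/

theorem IsGKType.orderOf_mul_lt_exponent {G : Type*} [Group G] (hG : IsGKType G) {x y : G}
    (hx : orderOf x < Monoid.exponent G) (hy : orderOf y < Monoid.exponent G) :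
    orderOf (x * y) < Monoid.exponent G := by
  obtain ⟨K, -, hK⟩ := hG
  have hmem : ∀ {z : G}, z ∈ K ↔ orderOf z < Monoid.exponent G := fun {z} =>
    Set.ext_iff.mp hK z
  exact hmem.mp (K.mul_mem (hmem.mpr hx) (hmem.mpr hy))

theorem not_isGKType_of_orderOf_mul_eq_exponent {G : Type*} [Group G] {x y : G}
    (hx : orderOf x < Monoid.exponent G) (hy : orderOf y < Monoid.exponent G)
    (hxy : orderOf (x * y) = Monoid.exponent G) : ¬ IsGKType G :=
  fun hG => (hG.orderOf_mul_lt_exponent hx hy).ne hxy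

namespace DihedralGroup

theorem exponent_of_even {n : ℕ} (hn : Even n) : Monoid.exponent (DihedralGroup n) = n := by
  rw [exponent, lcm_eq_left_iff _ _ (normalize_eq n)]
  exact even_iff_two_dvd.mp hn

theorem not_isGKType {n : ℕ} (hn : Even n) (h2n : 2 < n) : ¬ IsGKType (DihedralGroup n) := by
  have hsr : ∀ i : ZMod n, orderOf (sr i) < Monoid.exponent (DihedralGroup n) := fun i => by
    rwa [orderOf_sr, exponent_of_even hn]
  refine not_isGKType_of_orderOf_mul_eq_exponent (hsr 0) (hsr 1) ?_
  rw [sr_mul_sr, sub_zero, orderOf_r_one, exponent_of_even hn]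

end DihedralGroup

namespace QuaternionGroup

theorem exponent_of_even {n : ℕ} (hn : Even n) :
    Monoid.exponent (QuaternionGroup n) = 2 * n := by
  rw [exponent, (lcm_eq_left_iff _ _ (normalize_eq n)).mpr (even_iff_two_dvd.mp hn)]

theorem not_isGKType {n : ℕ} (hn : Even n) (h2n : 2 < n) : ¬ IsGKType (QuaternionGroup n) := by
  have : NeZero n := ⟨by omega⟩
  have hxa : ∀ i : ZMod (2 * n), orderOf (xa i) < Monoid.exponent (QuaternionGroup n) :=
    fun i => by rw [orderOf_xa, exponent_of_even hn]; omega
  refine not_isGKType_of_orderOf_mul_eq_exponent (hxa 0) (hxa (1 - n)) ?_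
  rw [xa_mul_xa, add_sub_cancel, sub_zero, orderOf_a_one, exponent_of_even hn]

end QuaternionGroup

theorem stmt_13 (l : ℕ) (hl : 2 ≤ l) :
    Monoid.exponent (DihedralGroup (2 ^ (l + 1))) = 2 ^ (l + 1) ∧
    ¬ IsGKType (DihedralGroup (2 ^ (l + 1))) ∧
    Monoid.exponent (QuaternionGroup (2 ^ l)) = 2 ^ (l + 1) ∧
    ¬ IsGKType (QuaternionGroup (2 ^ l)) := by
  have hD : Even (2 ^ (l + 1)) := (Nat.even_pow' l.succ_ne_zero).mpr even_two
  have hQ : Even (2 ^ l) := (Nat.even_pow' (by omega)).mpr even_two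
  have h2Q : 2 < 2 ^ l := calc
    2 < 2 ^ 2 := by norm_num
    _ ≤ 2 ^ l := Nat.pow_le_pow_right two_pos hl
  refine ⟨DihedralGroup.exponent_of_even hD, DihedralGroup.not_isGKType hD ?_,
    by rw [QuaternionGroup.exponent_of_even hQ, pow_succ'], QuaternionGroup.not_isGKType hQ h2Q⟩
  rw [pow_succ']
  omega
end

section
/- Let p be a prime and H a finite p-group with exp(Z(H)) = exp(H) = p^e, let h ∈ Z(H) with orderOf h = p^e, and let l ≥ 1. Let Ĝ := C × H, where C is cyclic of order p^(e+l) with generator ĝ, and let G := Ĝ/⟨(ĝ^(p^l), h⁻¹)⟩. Then exp(G) = p^(e+l); for each i ∈ {1,…,l}, the set {y ∈ G : orderOf y divides p^(e+l-i)} is a subgroup of G of index p^i, equal to the image in G of ⟨ĝ^(p^i)⟩ × H; in particular G is of GK type with i-th iterated GK kernel equal to the image of ⟨ĝ^(p^i)⟩ × H, its l-th iterated GK kernel is the (injective) image of H, and G is a trivial GK extension of H of degree p^l. Consequently, any finite p-group H with exp(Z(H)) = exp(H) has proper trivial GK extensions of every p-power degree. -/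
open Subgroup QuotientGroup

theorem Nat.dvd_prime_pow_iff_lt_succ {p k n : ℕ} (hp : p.Prime) (hn : n ∣ p ^ (k + 1)) :
    n ∣ p ^ k ↔ n < p ^ (k + 1) := by
  obtain ⟨m, hm, rfl⟩ := (Nat.dvd_prime_pow hp).mp hn
  rw [Nat.pow_dvd_pow_iff_le_right hp.one_lt, Nat.pow_lt_pow_iff_right hp.one_lt]
  omega

theorem Subgroup.isCoatom_of_index_prime {G : Type*} [Group G] {S : Subgroup G}
    (hS : S.index.Prime) : IsCoatom S := by
  have : S.FiniteIndex := ⟨hS.ne_zero⟩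
  refine ⟨fun htop => by simp [htop, Nat.not_prime_one] at hS, fun T hST => ?_⟩
  rcases hS.eq_one_or_self_of_dvd _ (index_dvd_of_le hST.le) with hT | hT
  · exact index_eq_one.mp hT
  · exact absurd hT (index_strictAnti hST).ne

theorem isGKType_of_index_eq_prime {P : Type*} [Group P] {p k : ℕ} (hp : p.Prime)
    (hexp : Monoid.exponent P = p ^ (k + 1)) (S : Subgroup P)
    (hS : (S : Set P) = {y | orderOf y ∣ p ^ k}) (hindex : S.index = p) : IsGKType P := by
  refine ⟨S, isCoatom_of_index_prime (hindex ▸ hp), ?_⟩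
  rw [hS, hexp]
  ext y
  exact Nat.dvd_prime_pow_iff_lt_succ hp (hexp ▸ Monoid.order_dvd_exponent y)

section Cyclic

theorem IsCyclic.range_powMonoidHom_eq_ker {G : Type*} [CommGroup G] [IsCyclic G] [Finite G]
    {d m : ℕ} (h : Nat.card G = d * m) :
    (powMonoidHom d : G →* G).range = (powMonoidHom m).ker := by
  have hd : d ≠ 0 := left_ne_zero_of_mul (h ▸ Nat.card_pos.ne')
  refine eq_of_le_of_card_ge ?_ ?_
  · rintro _ ⟨c, rfl⟩
    rw [MonoidHom.mem_ker, powMonoidHom_apply, powMonoidHom_apply, ← pow_mul, ← h,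
      ← IsCyclic.exponent_eq_card, Monoid.pow_exponent_eq_one]
  · rw [IsCyclic.card_powMonoidHom_range, IsCyclic.card_powMonoidHom_ker, h,
      Nat.gcd_mul_right_left, Nat.gcd_mul_left_left, Nat.mul_div_cancel_left _ hd.bot_lt]

theorem Nat.card_multiplicative_zmod (n : ℕ) : Nat.card (Multiplicative (ZMod n)) = n :=
  (Nat.card_congr Multiplicative.toAdd).trans (Nat.card_zmod n)

theorem exponent_multiplicative_zmod (n : ℕ) : Monoid.exponent (Multiplicative (ZMod n)) = n := by
  rw [IsCyclic.exponent_eq_card, Nat.card_multiplicative_zmod]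

theorem orderOf_ofAdd_one (n : ℕ) : orderOf (Multiplicative.ofAdd (1 : ZMod n)) = n := by
  rw [orderOf_ofAdd_eq_addOrderOf, ZMod.addOrderOf_one]

variable {n : ℕ} [NeZero n]

theorem zpowers_ofAdd_one_eq_top : zpowers (Multiplicative.ofAdd (1 : ZMod n)) = ⊤ :=
  eq_top_of_card_eq _ (by rw [Nat.card_zpowers, orderOf_ofAdd_one, Nat.card_multiplicative_zmod])

theorem zpowers_ofAdd_one_pow_eq_range (d : ℕ) :
    zpowers (Multiplicative.ofAdd (1 : ZMod n) ^ d) = (powMonoidHom d).range := by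
  rw [MonoidHom.range_eq_map, ← zpowers_ofAdd_one_eq_top, MonoidHom.map_zpowers,
    powMonoidHom_apply]

theorem mem_zpowers_ofAdd_one_pow_iff {d m : ℕ} (h : n = d * m) (c : Multiplicative (ZMod n)) :
    c ∈ zpowers (Multiplicative.ofAdd (1 : ZMod n) ^ d) ↔ c ^ m = 1 := by
  rw [zpowers_ofAdd_one_pow_eq_range,
    IsCyclic.range_powMonoidHom_eq_ker (by rwa [Nat.card_multiplicative_zmod]), MonoidHom.mem_ker,
    powMonoidHom_apply]

theorem index_zpowers_ofAdd_one_pow {d : ℕ} (hd : d ∣ n) :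
    (zpowers (Multiplicative.ofAdd (1 : ZMod n) ^ d)).index = d := by
  rw [zpowers_ofAdd_one_pow_eq_range, IsCyclic.index_powMonoidHom_range,
    Nat.card_multiplicative_zmod, Nat.gcd_eq_right hd]

end Cyclic

theorem Prod.fst_eq_one_iff_snd_eq_one_of_mem_zpowers {A B : Type*} [Group A] [Group B]
    {a : A} {b : B} (hab : orderOf a = orderOf b) {z : A × B} (hz : z ∈ zpowers (a, b)) :
    z.1 = 1 ↔ z.2 = 1 := by
  obtain ⟨k, rfl⟩ := mem_zpowers_iff.mp hz
  rw [Prod.pow_fst, Prod.pow_snd, ← orderOf_dvd_iff_zpow_eq_one,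
    ← orderOf_dvd_iff_zpow_eq_one, hab]

section QuotientOfProd

variable {A B : Type*} [Group A] [Group B]

theorem injective_mk_comp_inl_of_orderOf_eq {a : A} {b : B} (hab : orderOf a = orderOf b)
    [(zpowers (a, b)).Normal] :
    Function.Injective ((mk' (zpowers (a, b))).comp (MonoidHom.inl A B)) := by
  refine (injective_iff_map_eq_one _).mpr fun c hc => ?_
  rw [MonoidHom.comp_apply, mk'_apply, eq_one_iff] at hc
  exact (Prod.fst_eq_one_iff_snd_eq_one_of_mem_zpowers hab hc).mpr rfl

theorem injective_mk_comp_inr_of_orderOf_eq {a : A} {b : B} (hab : orderOf a = orderOf b)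
    [(zpowers (a, b)).Normal] :
    Function.Injective ((mk' (zpowers (a, b))).comp (MonoidHom.inr A B)) := by
  refine (injective_iff_map_eq_one _).mpr fun x hx => ?_
  rw [MonoidHom.comp_apply, mk'_apply, eq_one_iff] at hx
  exact (Prod.fst_eq_one_iff_snd_eq_one_of_mem_zpowers hab hx).mp rfl

theorem map_mk_zpowers_prod_top_eq_range_inr {a : A} {b : B} [(zpowers (a, b)).Normal] :
    ((zpowers a).prod ⊤).map (mk' (zpowers (a, b))) =
      ((mk' (zpowers (a, b))).comp (MonoidHom.inr A B)).range := by
  rw [MonoidHom.range_comp, MonoidHom.range_eq_map, map_eq_map_iff, ker_mk']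
  refine le_antisymm (sup_le ?_ le_sup_right) (sup_le ?_ ?_)
  · rintro ⟨c, x⟩ hcx
    obtain ⟨k, rfl⟩ := mem_zpowers_iff.mp (mem_prod.mp hcx).1
    have hdecomp : ((a ^ k, x) : A × B) = (1, x * b⁻¹ ^ k) * (a, b) ^ k := by ext <;> simp
    rw [hdecomp]
    exact mul_mem_sup (mem_map_of_mem _ (mem_top _)) (zpow_mem (mem_zpowers _) k)
  · rintro _ ⟨x, -, rfl⟩
    exact mem_sup_left (mem_prod.mpr ⟨one_mem _, mem_top x⟩)
  · exact le_sup_right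

variable {N : Subgroup (A × B)} [N.Normal]

theorem mk_mem_map_prod_top_iff {T : Subgroup A} (hN : N ≤ T.prod ⊤) (z : A × B) :
    mk' N z ∈ (T.prod ⊤).map (mk' N) ↔ z.1 ∈ T := by
  rw [← mem_comap, comap_map_eq_self (by rwa [ker_mk']), mem_prod]
  simp

theorem index_map_mk_prod_top {T : Subgroup A} (hN : N ≤ T.prod ⊤) :
    ((T.prod ⊤).map (mk' N)).index = T.index := by
  rw [index_map_eq _ (mk'_surjective N) (by rwa [ker_mk']), index_prod, index_top, mul_one]

theorem mk_pow_eq_one_iff (hinl : Function.Injective ((mk' N).comp (MonoidHom.inl A B)))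
    {m : ℕ} (hm : ∀ x : B, x ^ m = 1) (z : A × B) : mk' N z ^ m = 1 ↔ z.1 ^ m = 1 := by
  have : mk' N z ^ m = (mk' N).comp (MonoidHom.inl A B) (z.1 ^ m) := by
    rw [← map_pow, MonoidHom.comp_apply]
    congr 1
    ext <;> simp [hm]
  rw [this, map_eq_one_iff _ hinl]

theorem zpowers_mk_inl_sup_range_eq_top {g : A} (hg : zpowers g = ⊤) :
    zpowers (mk' N (g, 1)) ⊔ ((mk' N).comp (MonoidHom.inr A B)).range = ⊤ := by
  refine eq_top_iff.mpr fun y _ => ?_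
  obtain ⟨⟨c, x⟩, rfl⟩ := mk'_surjective N y
  obtain ⟨k, rfl⟩ := mem_zpowers_iff.mp (hg ▸ mem_top c : c ∈ zpowers g)
  have hdecomp : ((g ^ k, x) : A × B) = (g, 1) ^ k * (1, x) := by ext <;> simp
  rw [hdecomp, map_mul, map_zpow]
  exact mul_mem_sup (zpow_mem (mem_zpowers _) k) ⟨x, rfl⟩

theorem coe_map_mk_prod_top_eq_setOf_orderOf_dvd {T : Subgroup A} (hN : N ≤ T.prod ⊤)
    (hinl : Function.Injective ((mk' N).comp (MonoidHom.inl A B))) {m : ℕ}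
    (hm : ∀ x : B, x ^ m = 1) (hT : ∀ c, c ∈ T ↔ c ^ m = 1) :
    (((T.prod ⊤).map (mk' N) : Subgroup ((A × B) ⧸ N)) : Set ((A × B) ⧸ N)) =
      {y | orderOf y ∣ m} := by
  ext y
  obtain ⟨z, rfl⟩ := mk'_surjective N y
  rw [SetLike.mem_coe, mk_mem_map_prod_top_iff hN, Set.mem_ofPred_eq, orderOf_dvd_iff_pow_eq_one,
    mk_pow_eq_one_iff hinl hm, hT]

theorem exponent_quotient_prod (hinl : Function.Injective ((mk' N).comp (MonoidHom.inl A B)))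
    (hB : Monoid.exponent B ∣ Monoid.exponent A) :
    Monoid.exponent ((A × B) ⧸ N) = Monoid.exponent A := by
  refine Nat.dvd_antisymm ?_ (Monoid.exponent_dvd_of_monoidHom _ hinl)
  rw [← lcm_eq_left_iff _ _ (normalize_eq _) |>.mpr hB, ← Monoid.exponent_prod]
  exact MonoidHom.exponent_dvd (mk'_surjective N)

end QuotientOfProd

section QuotientOfCyclicProd

variable {n q : ℕ} {B : Type*} [Group B] {b : B}

theorem zpowers_ofAdd_one_pow_le_prod_top {d : ℕ} (hdq : d ∣ q) :
    zpowers (Multiplicative.ofAdd (1 : ZMod n) ^ q, b) ≤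
      (zpowers (Multiplicative.ofAdd (1 : ZMod n) ^ d)).prod ⊤ := by
  obtain ⟨k, rfl⟩ := hdq
  rw [zpowers_le, mem_prod, pow_mul]
  exact ⟨pow_mem (mem_zpowers _) k, mem_top _⟩

variable [NeZero n]

theorem orderOf_ofAdd_one_pow_eq_orderOf (hb : n = q * orderOf b) :
    orderOf (Multiplicative.ofAdd (1 : ZMod n) ^ q) = orderOf b := by
  have hq : q ≠ 0 := left_ne_zero_of_mul (hb ▸ NeZero.ne n)
  have hdvd : q ∣ orderOf (Multiplicative.ofAdd (1 : ZMod n)) := by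
    rw [orderOf_ofAdd_one, hb]
    exact dvd_mul_right q _
  rw [orderOf_pow_of_dvd hq hdvd, orderOf_ofAdd_one, hb, Nat.mul_div_cancel_left _ hq.bot_lt]

variable [(zpowers (Multiplicative.ofAdd (1 : ZMod n) ^ q, b)).Normal]

theorem coe_map_mk_zpowers_ofAdd_one_pow_prod_top {d m : ℕ} (hb : n = q * orderOf b)
    (hdq : d ∣ q) (hn : n = d * m) (hm : ∀ x : B, x ^ m = 1) :
    (((zpowers (Multiplicative.ofAdd (1 : ZMod n) ^ d)).prod ⊤).map
        (mk' (zpowers (Multiplicative.ofAdd (1 : ZMod n) ^ q, b))) :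
      Set ((Multiplicative (ZMod n) × B) ⧸ zpowers (Multiplicative.ofAdd (1 : ZMod n) ^ q, b))) =
      {y | orderOf y ∣ m} :=
  coe_map_mk_prod_top_eq_setOf_orderOf_dvd (zpowers_ofAdd_one_pow_le_prod_top hdq)
    (injective_mk_comp_inl_of_orderOf_eq (orderOf_ofAdd_one_pow_eq_orderOf hb)) hm
    (mem_zpowers_ofAdd_one_pow_iff hn)

theorem index_map_mk_zpowers_ofAdd_one_pow_prod_top {d : ℕ} (hdq : d ∣ q) (hqn : q ∣ n) :
    (((zpowers (Multiplicative.ofAdd (1 : ZMod n) ^ d)).prod ⊤).map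
        (mk' (zpowers (Multiplicative.ofAdd (1 : ZMod n) ^ q, b)))).index = d := by
  rw [index_map_mk_prod_top (zpowers_ofAdd_one_pow_le_prod_top hdq),
    index_zpowers_ofAdd_one_pow (hdq.trans hqn)]

theorem exponent_quotient_zpowers_ofAdd_one_pow (hb : n = q * orderOf b)
    (hB : Monoid.exponent B ∣ n) :
    Monoid.exponent ((Multiplicative (ZMod n) × B) ⧸
      zpowers (Multiplicative.ofAdd (1 : ZMod n) ^ q, b)) = n := by
  rw [exponent_quotient_prod
      (injective_mk_comp_inl_of_orderOf_eq (orderOf_ofAdd_one_pow_eq_orderOf hb))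
      (by rwa [exponent_multiplicative_zmod]),
    exponent_multiplicative_zmod]

end QuotientOfCyclicProd

theorem stmt_14_general (p e l : ℕ) (hp : p.Prime) (H : Type*) [Group H]
    (hexp : Monoid.exponent H = p ^ e)
    (h : H) (hord : orderOf h = p ^ e)
    (hl : 1 ≤ l)
    (K : Subgroup (Multiplicative (ZMod (p ^ (e + l))) × H))
    (hK : K = Subgroup.zpowers
      ((Multiplicative.ofAdd (1 : ZMod (p ^ (e + l)))) ^ p ^ l, h⁻¹))
    [K.Normal] :
    ∀ ι : H →* (Multiplicative (ZMod (p ^ (e + l))) × H) ⧸ K,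
      ι = (QuotientGroup.mk' K).comp (MonoidHom.inr (Multiplicative (ZMod (p ^ (e + l)))) H) →
    ∀ gbar : (Multiplicative (ZMod (p ^ (e + l))) × H) ⧸ K,
      gbar = QuotientGroup.mk' K (Multiplicative.ofAdd (1 : ZMod (p ^ (e + l))), 1) →
    Monoid.exponent ((Multiplicative (ZMod (p ^ (e + l))) × H) ⧸ K) = p ^ (e + l) ∧
    (∀ i : ℕ, 1 ≤ i → i ≤ l →
      ∃ S : Subgroup ((Multiplicative (ZMod (p ^ (e + l))) × H) ⧸ K),
        (S : Set ((Multiplicative (ZMod (p ^ (e + l))) × H) ⧸ K)) =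
          {y | orderOf y ∣ p ^ (e + l - i)} ∧
        S.index = p ^ i ∧
        S = Subgroup.map (QuotientGroup.mk' K)
          ((Subgroup.zpowers ((Multiplicative.ofAdd (1 : ZMod (p ^ (e + l)))) ^ p ^ i)).prod ⊤)) ∧
    IsGKType ((Multiplicative (ZMod (p ^ (e + l))) × H) ⧸ K) ∧
    Function.Injective ι ∧
    Subgroup.map (QuotientGroup.mk' K)
      ((Subgroup.zpowers ((Multiplicative.ofAdd (1 : ZMod (p ^ (e + l)))) ^ p ^ l)).prod ⊤) =
      ι.range ∧
    (∀ y ∈ ι.range, gbar * y = y * gbar) ∧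
    Subgroup.zpowers gbar ⊔ ι.range = ⊤ := by
  rintro ι rfl gbar rfl
  subst hK
  have : NeZero (p ^ (e + l)) := ⟨pow_ne_zero _ hp.ne_zero⟩
  have hb : p ^ (e + l) = p ^ l * orderOf h⁻¹ := by rw [orderOf_inv, hord, ← pow_add, add_comm]
  have hpow_eq_one : ∀ {k}, e ≤ k → ∀ x : H, x ^ p ^ k = 1 := fun hk =>
    Monoid.exponent_dvd_iff_forall_pow_eq_one.mp (hexp ▸ pow_dvd_pow p hk)
  have hS : ∀ i ≤ l, _ := fun i hi =>
    coe_map_mk_zpowers_ofAdd_one_pow_prod_top hb (pow_dvd_pow p hi)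
      (by rw [← pow_add]; congr 1; omega) (hpow_eq_one (k := e + l - i) (by omega))
  have hindex : ∀ i ≤ l, _ := fun i hi =>
    index_map_mk_zpowers_ofAdd_one_pow_prod_top (b := h⁻¹) (pow_dvd_pow p hi)
      (pow_dvd_pow p (Nat.le_add_left l e))
  have hexpG :=
    exponent_quotient_zpowers_ofAdd_one_pow hb (hexp ▸ pow_dvd_pow p (Nat.le_add_right e l))
  refine ⟨hexpG, fun i _ hi => ⟨_, hS i hi, hindex i hi, rfl⟩, ?_,
    injective_mk_comp_inr_of_orderOf_eq (orderOf_ofAdd_one_pow_eq_orderOf hb),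
    map_mk_zpowers_prod_top_eq_range_inr, ?_,
    zpowers_mk_inl_sup_range_eq_top zpowers_ofAdd_one_eq_top⟩
  · refine isGKType_of_index_eq_prime hp ?_ _ (hS 1 hl) (by rw [hindex 1 hl, pow_one])
    rwa [Nat.sub_add_cancel (by omega)]
  · rintro _ ⟨x, rfl⟩
    exact ((MonoidHom.commute_inl_inr _ x).map (mk' _)).eq

theorem stmt_14 (p e l : ℕ) (hp : p.Prime) (H : Type*) [Group H] [Finite H]
    (hH : IsPGroup p H)
    (hZexp : Monoid.exponent (Subgroup.center H) = p ^ e)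
    (hexp : Monoid.exponent H = p ^ e)
    (h : H) (hhZ : h ∈ Subgroup.center H) (hord : orderOf h = p ^ e)
    (hl : 1 ≤ l)
    (K : Subgroup (Multiplicative (ZMod (p ^ (e + l))) × H))
    (hK : K = Subgroup.zpowers
      ((Multiplicative.ofAdd (1 : ZMod (p ^ (e + l)))) ^ p ^ l, h⁻¹))
    [K.Normal] :
    ∀ ι : H →* (Multiplicative (ZMod (p ^ (e + l))) × H) ⧸ K,
      ι = (QuotientGroup.mk' K).comp (MonoidHom.inr (Multiplicative (ZMod (p ^ (e + l)))) H) →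
    ∀ gbar : (Multiplicative (ZMod (p ^ (e + l))) × H) ⧸ K,
      gbar = QuotientGroup.mk' K (Multiplicative.ofAdd (1 : ZMod (p ^ (e + l))), 1) →
    Monoid.exponent ((Multiplicative (ZMod (p ^ (e + l))) × H) ⧸ K) = p ^ (e + l) ∧
    (∀ i : ℕ, 1 ≤ i → i ≤ l →
      ∃ S : Subgroup ((Multiplicative (ZMod (p ^ (e + l))) × H) ⧸ K),
        (S : Set ((Multiplicative (ZMod (p ^ (e + l))) × H) ⧸ K)) =
          {y | orderOf y ∣ p ^ (e + l - i)} ∧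
        S.index = p ^ i ∧
        S = Subgroup.map (QuotientGroup.mk' K)
          ((Subgroup.zpowers ((Multiplicative.ofAdd (1 : ZMod (p ^ (e + l)))) ^ p ^ i)).prod ⊤)) ∧
    IsGKType ((Multiplicative (ZMod (p ^ (e + l))) × H) ⧸ K) ∧
    Function.Injective ι ∧
    Subgroup.map (QuotientGroup.mk' K)
      ((Subgroup.zpowers ((Multiplicative.ofAdd (1 : ZMod (p ^ (e + l)))) ^ p ^ l)).prod ⊤) =
      ι.range ∧
    (∀ y ∈ ι.range, gbar * y = y * gbar) ∧
    Subgroup.zpowers gbar ⊔ ι.range = ⊤ :=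
  stmt_14_general p e l hp H hexp h hord hl K hK
end

section
/- Let p be a prime and R a finite abelian p-group. Then the automorphism group of R acts transitively on the set of elements of maximal order: for any z, z' ∈ R with orderOf z = orderOf z' = exp(R), there exists an automorphism α of R with α(z) = z'. -/
/-!
Let `p ^ e = exp R` and view `R` as a module over `ZMod (p ^ e)`, a local ring which is
self-injective. An element `z` of maximal order spans a free cyclic submodule, so by Baer's
criterion there is a linear form `f` with `f z = 1`; then `x ↦ x + f x • (w - z)` is an
automorphism sending `z` to `w` as soon as `f w` is a unit. Taking such forms `f` for `z` and
`f'` for `z'`, locality provides `w` among `z'`, `z`, `z + z'` with `f w` and `f' w` both units,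
and the two automorphisms through `w` compose to one sending `z` to `z'`.
-/

open Module

namespace ZMod

variable {n : ℕ} [NeZero n]

theorem dvd_of_forall_mul_eq_zero {a b : ZMod n} (h : ∀ c, c * a = 0 → c * b = 0) : a ∣ b := by
  -- `n / d` kills `a`, hence `b`, so `d ∣ b`; and `a ∣ d` by Bézout (`mul_inv_eq_gcd`).
  set d := Nat.gcd a.val n
  have hdn : d ∣ n := Nat.gcd_dvd_right _ _
  have hd : 0 < d := Nat.gcd_pos_of_pos_right _ (NeZero.pos n)
  have hcofactor : 0 < n / d := Nat.div_pos (Nat.le_of_dvd (NeZero.pos n) hdn) hd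
  have hkill : ∀ x : ZMod n, ((n / d : ℕ) : ZMod n) * x = 0 ↔ d ∣ x.val := fun x ↦ by
    conv_lhs => rw [← natCast_zmod_val x, ← Nat.cast_mul, natCast_eq_zero_iff]
    calc n ∣ n / d * x.val ↔ d * (n / d) ∣ x.val * (n / d) := by
          rw [Nat.mul_div_cancel' hdn, mul_comm]
      _ ↔ d ∣ x.val := Nat.mul_dvd_mul_iff_right hcofactor
  obtain ⟨k, hk⟩ := (hkill b).1 (h _ ((hkill a).2 (Nat.gcd_dvd_left _ _)))
  refine ⟨a⁻¹ * k, ?_⟩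
  rw [← mul_assoc, mul_inv_eq_gcd, ← natCast_zmod_val b, hk, Nat.cast_mul]

theorem baer_self : Baer (ZMod n) (ZMod n) := by
  have : IsPrincipalIdealRing (ZMod n) :=
    .of_surjective (Int.castRingHom (ZMod n)) intCast_surjective
  intro I g
  obtain ⟨a, rfl⟩ := (IsPrincipalIdealRing.principal I).principal
  have ha : a ∈ Ideal.span {a} := Ideal.mem_span_singleton_self a
  obtain ⟨t, ht⟩ : a ∣ g ⟨a, ha⟩ := dvd_of_forall_mul_eq_zero fun c hc ↦ by
    rw [← smul_eq_mul, ← map_smul]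
    convert g.map_zero
    exact Subtype.ext hc
  refine ⟨LinearMap.toSpanSingleton _ _ t, fun x hx ↦ ?_⟩
  obtain ⟨s, rfl⟩ := Ideal.mem_span_singleton'.mp hx
  have : (⟨s * a, hx⟩ : Ideal.span {a}) = s • ⟨a, ha⟩ := rfl
  rw [this, map_smul, ht, LinearMap.toSpanSingleton_apply, smul_eq_mul, smul_eq_mul, mul_assoc]

theorem injective_toSpanSingleton {M : Type*} [AddCommGroup M] [Module (ZMod n) M] {z : M}
    (hz : addOrderOf z = n) : Function.Injective (LinearMap.toSpanSingleton (ZMod n) M z) := by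
  refine (injective_iff_map_eq_zero _).2 fun c hc ↦ ?_
  rw [LinearMap.toSpanSingleton_apply, ← natCast_zmod_val c, Nat.cast_smul_eq_nsmul] at hc
  rw [← natCast_zmod_val c, natCast_eq_zero_iff]
  simpa only [hz] using addOrderOf_dvd_of_nsmul_eq_zero hc

theorem isLocalRing_prime_pow {p e : ℕ} (hp : p.Prime) (he : e ≠ 0) :
    IsLocalRing (ZMod (p ^ e)) := by
  have : Fact (1 < p ^ e) := ⟨Nat.one_lt_pow he hp.one_lt⟩
  have hnonunit : ∀ x : ZMod (p ^ e), x ∈ nonunits _ ↔ p ∣ x.val := fun x ↦ by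
    rw [mem_nonunits_iff, ← natCast_zmod_val x, val_natCast_of_lt (val_lt x),
      isUnit_natCast_iff_not_dvd_pow hp (Nat.pos_of_ne_zero he), not_not]
  refine .of_nonunits_add fun a b ha hb ↦ ?_
  rw [hnonunit] at ha hb
  rw [hnonunit, val_add]
  exact (Nat.dvd_mod_iff (dvd_pow_self p he)).2 (dvd_add ha hb)

end ZMod

section

variable {S M : Type*} [CommRing S] [AddCommGroup M] [Module S M]

theorem Module.Baer.exists_dual_apply_eq_one (hS : Baer S S) {z : M}
    (hz : Function.Injective (LinearMap.toSpanSingleton S M z)) : ∃ f : Dual S M, f z = 1 := by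
  obtain ⟨f, hf⟩ := hS.extension_property _ hz LinearMap.id
  exact ⟨f, by simpa using LinearMap.congr_fun hf 1⟩

theorem exists_linearEquiv_apply_eq_of_isUnit {f : Dual S M} {z w : M} (hz : f z = 1)
    (hw : IsUnit (f w)) : ∃ α : M ≃ₗ[S] M, α z = w := by
  have h : IsUnit (1 + f (w - z)) := by rwa [map_sub, hz, add_sub_cancel]
  exact ⟨LinearEquiv.dilatransvection h, by
    rw [LinearEquiv.dilatransvection.apply, hz, one_smul, add_sub_cancel]⟩

theorem exists_linearEquiv_apply_eq_of_isUnit_of_isUnit {f f' : Dual S M} {z z' w : M}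
    (hz : f z = 1) (hz' : f' z' = 1) (hw : IsUnit (f w)) (hw' : IsUnit (f' w)) :
    ∃ α : M ≃ₗ[S] M, α z = z' := by
  obtain ⟨α, hα⟩ := exists_linearEquiv_apply_eq_of_isUnit hz hw
  obtain ⟨β, hβ⟩ := exists_linearEquiv_apply_eq_of_isUnit hz' hw'
  exact ⟨α.trans β.symm, by rw [LinearEquiv.trans_apply, hα, ← hβ, LinearEquiv.symm_apply_apply]⟩

theorem IsLocalRing.isUnit_one_add_of_not_isUnit [IsLocalRing S] {a : S} (ha : ¬IsUnit a) :
    IsUnit (1 + a) :=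
  (isUnit_or_isUnit_of_isUnit_add (a := 1 + a) (b := -a) (by simp)).resolve_right
    (by rwa [IsUnit.neg_iff])

theorem exists_linearEquiv_apply_eq [IsLocalRing S] (hS : Baer S S) {z z' : M}
    (hz : Function.Injective (LinearMap.toSpanSingleton S M z))
    (hz' : Function.Injective (LinearMap.toSpanSingleton S M z')) :
    ∃ α : M ≃ₗ[S] M, α z = z' := by
  obtain ⟨f, hf⟩ := hS.exists_dual_apply_eq_one hz
  obtain ⟨f', hf'⟩ := hS.exists_dual_apply_eq_one hz'
  -- One of `z'`, `z`, `z + z'` has unit image under both `f` and `f'`.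
  by_cases h : IsUnit (f z')
  · exact exists_linearEquiv_apply_eq_of_isUnit_of_isUnit hf hf' h (hf' ▸ isUnit_one)
  by_cases h' : IsUnit (f' z)
  · exact exists_linearEquiv_apply_eq_of_isUnit_of_isUnit hf hf' (hf ▸ isUnit_one) h'
  refine exists_linearEquiv_apply_eq_of_isUnit_of_isUnit (w := z + z') hf hf' ?_ ?_
  · rw [map_add, hf]
    exact IsLocalRing.isUnit_one_add_of_not_isUnit h
  · rw [map_add, hf', add_comm]
    exact IsLocalRing.isUnit_one_add_of_not_isUnit h'

end

theorem stmt_17 (p : ℕ) (hp : p.Prime) (R : Type*) [CommGroup R] [Finite R]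
    (hR : IsPGroup p R) (z z' : R)
    (hz : orderOf z = Monoid.exponent R) (hz' : orderOf z' = Monoid.exponent R) :
    ∃ α : R ≃* R, α z = z' := by
  have : Fact p.Prime := ⟨hp⟩
  obtain ⟨e, he⟩ := hR.exists_exponent_eq_pow
  rcases eq_or_ne e 0 with rfl | he0
  · rw [he, pow_zero, orderOf_eq_one_iff] at hz hz'
    exact ⟨MulEquiv.refl R, by rw [hz, hz', MulEquiv.refl_apply]⟩
  have : IsLocalRing (ZMod (p ^ e)) := ZMod.isLocalRing_prime_pow hp he0
  let : Module (ZMod (p ^ e)) (Additive R) := AddCommGroup.zmodModule fun x ↦ by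
    rw [← he]
    exact congrArg Additive.ofMul (Monoid.pow_exponent_eq_one x.toMul)
  have hord : ∀ x : R, orderOf x = Monoid.exponent R → addOrderOf (Additive.ofMul x) = p ^ e :=
    fun x hx ↦ by rw [addOrderOf_ofMul_eq_orderOf, hx, he]
  obtain ⟨α, hα⟩ := exists_linearEquiv_apply_eq ZMod.baer_self
    (ZMod.injective_toSpanSingleton (hord z hz)) (ZMod.injective_toSpanSingleton (hord z' hz'))
  exact ⟨AddEquiv.toMultiplicative α.toAddEquiv, hα⟩
end

section
/- Let p be a prime, H a finite p-group with exp(Z(H)) = exp(H) = p^e, and l ≥ 1. Let h ∈ Z(H) with orderOf h = p^e, let α be an automorphism of H, let k be an integer coprime to p, and let z ∈ Z(H); set h' := α(h)^k · z^(p^l). Then h' ∈ Z(H) also has order p^e, and the two centrally amalgamated products Ĝ/⟨(ĝ^(p^l), h⁻¹)⟩ and Ĝ/⟨(ĝ^(p^l), h'⁻¹)⟩ are isomorphic as groups, where Ĝ := C × H with C cyclic of order p^(e+l) and generator ĝ. -/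
/-!
Since `z^(p^l)` has order at most `p^(e-1)` and commutes with `α(h)^k`, which has order `p^e`,
the element `h'` has order `p^e`. For the isomorphism, pick `u` with `u k ≡ 1 (mod p^(e+l))`;
as `p^(e+l)` kills `Ĝ`, the subgroup `⟨(ĝ^(p^l), h⁻¹)⟩` is also generated by its `k`-th power
`(ĝ^(k p^l), h^(-k))`. The automorphism `c ↦ c^u` of `C`, then `α` on `H`, then the shear
`(c, x) ↦ (c, x ψ(c))` along the homomorphism `ψ : C → Z(H)` with `ψ(ĝ) = z⁻¹`, maps this
generator to `(ĝ^(p^l), h'⁻¹)`.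
-/

open Subgroup

section

variable {G : Type*} [Group G]

theorem zpow_eq_self_of_modEq_one {x : G} {n : ℕ} {m : ℤ} (hx : x ^ n = 1)
    (hm : m ≡ 1 [ZMOD n]) : x ^ m = x := by
  conv_rhs => rw [← zpow_one x]
  exact zpow_eq_zpow_iff_modEq.2
    (hm.of_dvd (Int.natCast_dvd_natCast.2 (orderOf_dvd_of_pow_eq_one hx)))

theorem zpowers_zpow_eq_of_isCoprime {x : G} {n : ℕ} {k : ℤ} (hx : x ^ n = 1)
    (hk : IsCoprime k n) : zpowers (x ^ k) = zpowers x := by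
  refine le_antisymm (zpowers_le.2 (zpow_mem (mem_zpowers x) k)) (zpowers_le.2 ?_)
  refine mem_zpowers_zpow_iff.2 (Int.isCoprime_iff_gcd_eq_one.1 ?_)
  exact hk.of_isCoprime_of_dvd_right (Int.natCast_dvd_natCast.2 (orderOf_dvd_of_pow_eq_one hx))

theorem orderOf_zpow_eq_of_isCoprime {x : G} {n : ℕ} {k : ℤ} (hx : x ^ n = 1)
    (hk : IsCoprime k n) : orderOf (x ^ k) = orderOf x := by
  rw [← Nat.card_zpowers, zpowers_zpow_eq_of_isCoprime hx hk, Nat.card_zpowers]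

theorem Commute.orderOf_mul_pow_prime_pow {p e l : ℕ} [Fact p.Prime] {b z : G}
    (hbz : Commute b z) (hb : orderOf b = p ^ e) (hz : z ^ p ^ e = 1) (hl : 1 ≤ l) :
    orderOf (b * z ^ p ^ l) = p ^ e := by
  rcases e with _ | n
  · simp_all [orderOf_eq_one_iff]
  have hz' : ∀ m, n + 1 ≤ l + m → (z ^ p ^ l) ^ p ^ m = 1 := fun m hm => by
    rw [← pow_mul, ← pow_add, ← Nat.sub_add_cancel hm, pow_add, pow_mul', hz, one_pow]
  have hcomm := hbz.pow_right (p ^ l)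
  refine orderOf_eq_prime_pow ?_ ?_
  · rw [hcomm.mul_pow, hz' n (by omega), mul_one, ← orderOf_dvd_iff_pow_eq_one, hb]
    exact (Nat.pow_dvd_pow_iff_le_right (Fact.out : p.Prime).one_lt).not.2 (by omega)
  · rw [hcomm.mul_pow, hz' (n + 1) (by omega), mul_one, ← hb, pow_orderOf_eq_one]

end

@[simps]
def zpowMulEquiv {A : Type*} [CommGroup A] {n : ℕ} {k u : ℤ} (hA : ∀ a : A, a ^ n = 1)
    (hku : k * u ≡ 1 [ZMOD n]) : A ≃* A where
  toFun a := a ^ k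
  invFun a := a ^ u
  left_inv a := by simp only [← zpow_mul, zpow_eq_self_of_modEq_one (hA a) hku]
  right_inv a := by simp only [← zpow_mul, mul_comm u, zpow_eq_self_of_modEq_one (hA a) hku]
  map_mul' a b := mul_zpow a b k

@[simps]
def MulEquiv.prodShear {A B : Type*} [Group A] [Group B] (ψ : A →* center B) : A × B ≃* A × B where
  toFun y := (y.1, y.2 * ψ y.1)
  invFun y := (y.1, y.2 * (ψ y.1)⁻¹)
  left_inv y := by simp
  right_inv y := by simp
  map_mul' a b := by
    ext
    · rfl
    · simp only [Prod.snd_mul, Prod.fst_mul, map_mul, Subgroup.coe_mul]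
      rw [mul_assoc, ← mul_assoc b.2, mem_center_iff.1 (ψ a.1).2 b.2]
      simp only [mul_assoc]

def ZMod.liftMul (n : ℕ) {G : Type*} [Group G] {w : G} (hw : w ^ n = 1) :
    Multiplicative (ZMod n) →* G :=
  AddMonoidHom.toMultiplicativeLeft
    (ZMod.lift n ⟨zmultiplesHom _ (Additive.ofMul w), by simp [← ofMul_pow, hw]⟩)

theorem ZMod.liftMul_ofAdd_one (n : ℕ) {G : Type*} [Group G] {w : G} (hw : w ^ n = 1) :
    ZMod.liftMul n hw (Multiplicative.ofAdd 1) = w := by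
  rw [ZMod.liftMul, AddMonoidHom.toMultiplicativeLeft_apply_apply, toAdd_ofAdd, ← Int.cast_one,
    ZMod.lift_coe]
  simp

theorem exists_mulEquiv_map_zpowers_eq {H : Type*} [Group H] {n : ℕ} (α : H ≃* H) {a z : H}
    (ha : a ^ n = 1) (hz : z ∈ center H) (hzn : z ^ n = 1) {k : ℤ} (hk : IsCoprime k n) (q : ℕ) :
    ∃ Φ : Multiplicative (ZMod n) × H ≃* Multiplicative (ZMod n) × H,
      (zpowers (Multiplicative.ofAdd (1 : ZMod n) ^ q, a⁻¹)).map (Φ : _ →* _) =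
        zpowers (Multiplicative.ofAdd (1 : ZMod n) ^ q, (α a ^ k * z ^ q)⁻¹) := by
  set g := Multiplicative.ofAdd (1 : ZMod n)
  have hC : ∀ c : Multiplicative (ZMod n), c ^ n = 1 := fun c => by
    rw [← ofAdd_toAdd c, ← ofAdd_nsmul, nsmul_eq_mul, ZMod.natCast_self, zero_mul, ofAdd_zero]
  obtain ⟨u, v, huv⟩ := hk
  have huk : u * k ≡ 1 [ZMOD n] := Int.modEq_iff_dvd.2 ⟨v, by linarith⟩
  have hzinv : (⟨z, hz⟩⁻¹ : center H) ^ n = 1 := Subtype.ext (by simp [hzn])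
  let Φ := (MulEquiv.prodCongr (zpowMulEquiv hC huk) α).trans
    (MulEquiv.prodShear (ZMod.liftMul n hzinv))
  have hΦ : Φ ((g ^ q, a⁻¹) ^ k) = (g ^ q, (α a ^ k * z ^ q)⁻¹) := by
    have hgq : ((g ^ q) ^ k) ^ u = g ^ q := by
      rw [← zpow_mul, mul_comm, zpow_eq_self_of_modEq_one (hC _) huk]
    have hzq : Commute (α a ^ k) (z ^ q) := mem_center_iff.1 (pow_mem hz q) _
    have hψ : (ZMod.liftMul n hzinv g : H) = z⁻¹ :=
      congrArg Subtype.val (ZMod.liftMul_ofAdd_one n hzinv)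
    simp [Φ, MulEquiv.prodCongr, hgq, hψ, hzq.eq]
  refine ⟨Φ, ?_⟩
  have hx : (g ^ q, a⁻¹) ^ n = 1 := Prod.ext (hC _) (by simp [ha])
  rw [← zpowers_zpow_eq_of_isCoprime hx ⟨u, v, huv⟩, MonoidHom.map_zpowers, MonoidHom.coe_coe, hΦ]

theorem stmt_18_general (p e l : ℕ) (hp : p.Prime) (H : Type*) [Group H]
    (hexp : Monoid.exponent H = p ^ e)
    (h : H) (hhZ : h ∈ Subgroup.center H) (hord : orderOf h = p ^ e)
    (hl : 1 ≤ l)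
    (α : H ≃* H) (k : ℤ) (hk : Int.gcd k p = 1)
    (z : H) (hz : z ∈ Subgroup.center H)
    (h' : H) (hh' : h' = (α h) ^ k * z ^ p ^ l)
    (K K' : Subgroup (Multiplicative (ZMod (p ^ (e + l))) × H))
    (hK : K = Subgroup.zpowers
      ((Multiplicative.ofAdd (1 : ZMod (p ^ (e + l)))) ^ p ^ l, h⁻¹))
    (hK' : K' = Subgroup.zpowers
      ((Multiplicative.ofAdd (1 : ZMod (p ^ (e + l)))) ^ p ^ l, h'⁻¹))
    [K.Normal] [K'.Normal] :
    h' ∈ Subgroup.center H ∧ orderOf h' = p ^ e ∧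
    Nonempty (((Multiplicative (ZMod (p ^ (e + l))) × H) ⧸ K) ≃*
      ((Multiplicative (ZMod (p ^ (e + l))) × H) ⧸ K')) := by
  subst hh' hK hK'
  have : Fact p.Prime := ⟨hp⟩
  have hpow : ∀ {m}, e ≤ m → ∀ x : H, x ^ p ^ m = 1 := fun hm =>
    Monoid.exponent_dvd_iff_forall_pow_eq_one.1 (hexp ▸ pow_dvd_pow p hm)
  have hcop : ∀ m, IsCoprime k (p ^ m : ℕ) := fun m => by
    simpa using (Int.isCoprime_iff_gcd_eq_one.2 hk).pow_right (n := m)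
  have hordk : orderOf (α h ^ k) = p ^ e := by
    rw [orderOf_zpow_eq_of_isCoprime (hpow le_rfl _) (hcop e), MulEquiv.orderOf_eq, hord]
  refine ⟨mul_mem (zpow_mem ((MulEquivClass.apply_mem_center_iff α).2 hhZ) k) (pow_mem hz _),
    Commute.orderOf_mul_pow_prime_pow (mem_center_iff.1 hz _) hordk (hpow le_rfl z) hl, ?_⟩
  obtain ⟨Φ, hΦ⟩ := exists_mulEquiv_map_zpowers_eq α (hpow (Nat.le_add_right e l) h) hz
    (hpow (Nat.le_add_right e l) z) (hcop (e + l)) (p ^ l)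
  exact ⟨QuotientGroup.congr _ _ Φ hΦ⟩

theorem stmt_18 (p e l : ℕ) (hp : p.Prime) (H : Type*) [Group H] [Finite H]
    (hH : IsPGroup p H)
    (hZexp : Monoid.exponent (Subgroup.center H) = p ^ e)
    (hexp : Monoid.exponent H = p ^ e)
    (h : H) (hhZ : h ∈ Subgroup.center H) (hord : orderOf h = p ^ e)
    (hl : 1 ≤ l)
    (α : H ≃* H) (k : ℤ) (hk : Int.gcd k p = 1)
    (z : H) (hz : z ∈ Subgroup.center H)
    (h' : H) (hh' : h' = (α h) ^ k * z ^ p ^ l)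
    (K K' : Subgroup (Multiplicative (ZMod (p ^ (e + l))) × H))
    (hK : K = Subgroup.zpowers
      ((Multiplicative.ofAdd (1 : ZMod (p ^ (e + l)))) ^ p ^ l, h⁻¹))
    (hK' : K' = Subgroup.zpowers
      ((Multiplicative.ofAdd (1 : ZMod (p ^ (e + l)))) ^ p ^ l, h'⁻¹))
    [K.Normal] [K'.Normal] :
    h' ∈ Subgroup.center H ∧ orderOf h' = p ^ e ∧
    Nonempty (((Multiplicative (ZMod (p ^ (e + l))) × H) ⧸ K) ≃*
      ((Multiplicative (ZMod (p ^ (e + l))) × H) ⧸ K')) :=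
  stmt_18_general p e l hp H hexp h hhZ hord hl α k hk z hz h' hh' K K' hK hK'
end

section
/- Let p be a prime, H a finite p-group with exp(Z(H)) = exp(H) = p^e, and l ≥ 1. Let h, h' ∈ Z(H) both of order p^e, let Ĝ := C × H with C cyclic of order p^(e+l) and generator ĝ, and set K := ⟨(ĝ^(p^l), h⁻¹)⟩ and K' := ⟨(ĝ^(p^l), h'⁻¹)⟩. If the quotients Ĝ/K and Ĝ/K' are isomorphic as groups, then there exist an automorphism α of H, an integer k coprime to p, and z ∈ Z(H) such that h' = α(h)^k · z^(p^l). -/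
/-!
Write `Q = (C × H) ⧸ K` with canonical maps `inl : C → Q`, `inr : H → Q`, and `ĝ = inl g`.
Since `h` and `g ^ p ^ l` have the same order `p ^ e`, both maps are injective, and the image
of `inr` is exactly the set of `u` with `u ^ p ^ e = 1`. Hence an isomorphism `φ : Q ≃* Q'`
restricts to an automorphism `α` of `H`. Write `φ ĝ = inl (g ^ m) * inr y`; it is central, so
`y` is central, and `ĝ ^ p ^ (e + l - 1) ≠ 1`, so `p ∤ m`. Raising to the power `p ^ l` gives
`α h = h' ^ m * y ^ p ^ l`, and inverting `m` modulo `p ^ e` yields the claim.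
-/

open Subgroup

lemma Subgroup.map_equiv_eq_of_mem_iff_pow_eq_one {Q Q' : Type*} [Group Q] [Group Q']
    (φ : Q ≃* Q') (n : ℕ) {S : Subgroup Q} {T : Subgroup Q'}
    (hS : ∀ u, u ∈ S ↔ u ^ n = 1) (hT : ∀ u, u ∈ T ↔ u ^ n = 1) :
    S.map (φ : Q →* Q') = T := by
  ext u
  rw [map_equiv_eq_comap_symm, mem_comap, hS, hT, MonoidHom.coe_coe, ← map_pow,
    MulEquiv.map_eq_one_iff]

lemma MulEquiv.exists_apply_comp_eq_of_map_range_eq {H H' Q Q' : Type*} [Group H] [Group H']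
    [Group Q] [Group Q'] (φ : Q ≃* Q') {ρ : H →* Q} {ρ' : H' →* Q'}
    (hρ : Function.Injective ρ) (hρ' : Function.Injective ρ')
    (hmap : ρ.range.map (φ : Q →* Q') = ρ'.range) :
    ∃ α : H ≃* H', ∀ x, ρ' (α x) = φ (ρ x) :=
  ⟨(MonoidHom.ofInjective hρ).trans ((φ.subgroupMap ρ.range).trans
      ((MulEquiv.subgroupCongr hmap).trans (MonoidHom.ofInjective hρ').symm)),
    fun _ => MonoidHom.apply_ofInjective_symm hρ' _⟩

lemma Subgroup.mem_center_of_injective {G G' : Type*} [Group G] [Group G'] {f : G →* G'}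
    (hf : Function.Injective f) {y : G} (hy : f y ∈ center G') : y ∈ center G :=
  mem_center_iff.2 fun x => hf <| by rw [map_mul, map_mul, mem_center_iff.1 hy]

lemma exists_gcd_eq_one_eq_zpow_mul_pow {G : Type*} [Group G] {p e : ℕ} (hp : p.Prime)
    {x y : G} (hxy : Commute x y) (hx : orderOf x = p ^ e) {m : ℤ} (hm : ¬ (p : ℤ) ∣ m)
    (q : ℕ) : ∃ k : ℤ, Int.gcd k p = 1 ∧ x = (x ^ m * y ^ q) ^ k * (y ^ (-k)) ^ q := by
  obtain ⟨u, k, huk⟩ :=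
    ((Nat.prime_iff_prime_int.mp hp).coprime_iff_not_dvd.2 hm).pow_left (m := e + 1)
  refine ⟨k, Int.isCoprime_iff_gcd_eq_one.1 ⟨m, u * p ^ e, by linear_combination huk⟩, ?_⟩
  have hxk : x ^ (m * k) = x := by
    rw [show m * k = 1 + (p ^ e : ℕ) * (-u * p) by push_cast; linear_combination huk,
      zpow_add, zpow_one, zpow_mul, zpow_natCast, ← hx, pow_orderOf_eq_one, one_zpow, mul_one]
  rw [((hxy.zpow_left m).pow_right q).mul_zpow, ← zpow_mul, hxk]
  group

section

variable {G : Type*} [Group G] {g : G}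

lemma orderOf_pow_pow_of_orderOf_eq {p e l : ℕ} (hp : p ≠ 0)
    (hg : orderOf g = p ^ (e + l)) : orderOf (g ^ p ^ l) = p ^ e := by
  rw [orderOf_pow_of_dvd (pow_ne_zero l hp) (hg ▸ pow_dvd_pow p (Nat.le_add_left l e)), hg,
    pow_add, Nat.mul_div_cancel _ (pow_pos (Nat.pos_of_ne_zero hp) l)]

lemma Subgroup.mem_center_of_forall_mem_zpowers (hgen : ∀ c : G, c ∈ zpowers g) :
    g ∈ center G :=
  mem_center_iff.2 fun c => by
    obtain ⟨k, rfl⟩ := mem_zpowers_iff.1 (hgen c)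
    exact ((Commute.refl g).zpow_left k).eq

lemma mem_zpowers_pow_of_pow_eq_one {q r : ℕ} (hr : r ≠ 0) (hgen : ∀ c : G, c ∈ zpowers g)
    (hg : orderOf g = q * r) {c : G} (hc : c ^ r = 1) : c ∈ zpowers (g ^ q) := by
  obtain ⟨a, rfl⟩ := mem_zpowers_iff.1 (hgen c)
  rw [← zpow_natCast, ← zpow_mul, ← orderOf_dvd_iff_zpow_eq_one, hg, Nat.cast_mul] at hc
  obtain ⟨d, rfl⟩ := (mul_dvd_mul_iff_right (Int.natCast_ne_zero.2 hr)).1 hc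
  exact mem_zpowers_iff.2 ⟨d, by rw [← zpow_natCast, ← zpow_mul]⟩

end

namespace CentralAmalgam

variable {C H : Type*} [Group C] [Group H]

def inl (K : Subgroup (C × H)) [K.Normal] : C →* (C × H) ⧸ K :=
  (QuotientGroup.mk' K).comp (MonoidHom.inl C H)

def inr (K : Subgroup (C × H)) [K.Normal] : H →* (C × H) ⧸ K :=
  (QuotientGroup.mk' K).comp (MonoidHom.inr C H)

section

variable (K : Subgroup (C × H)) [K.Normal]

lemma inl_mul_inr (c : C) (x : H) : inl K c * inr K x = ((c, x) : C × H) := by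
  rw [inl, inr, MonoidHom.comp_apply, MonoidHom.comp_apply, ← map_mul, MonoidHom.inl_apply,
    MonoidHom.inr_apply, Prod.mk_mul_mk, mul_one, one_mul, QuotientGroup.mk'_apply]

lemma exists_eq_inl_mul_inr (u : (C × H) ⧸ K) : ∃ c x, u = inl K c * inr K x := by
  obtain ⟨⟨c, x⟩, rfl⟩ := QuotientGroup.mk_surjective u
  exact ⟨c, x, (inl_mul_inr K c x).symm⟩

lemma commute_inl_inr (c : C) (x : H) : Commute (inl K c) (inr K x) :=
  (MonoidHom.commute_inl_inr c x).map (QuotientGroup.mk' K)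

lemma inl_mem_center {c : C} (hc : c ∈ center C) : inl K c ∈ center ((C × H) ⧸ K) := by
  refine mem_center_iff.2 fun u => ?_
  obtain ⟨c', x, rfl⟩ := exists_eq_inl_mul_inr K u
  have hcc' : Commute c' c := mem_center_iff.1 hc c'
  exact ((hcc'.map (inl K)).symm.mul_right (commute_inl_inr K c x)).eq.symm

end

section

variable {c₀ : C} {b : H} [(zpowers (c₀, b)).Normal]

lemma mk_eq_one_iff {c : C} {x : H} :
    (((c, x) : C × H) : (C × H) ⧸ zpowers (c₀, b)) = 1 ↔
      ∃ n : ℤ, c₀ ^ n = c ∧ b ^ n = x := by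
  simp only [QuotientGroup.eq_one_iff, mem_zpowers_iff, Prod.pow_mk, Prod.mk.injEq]

lemma inl_eq_inr_inv : inl (zpowers (c₀, b)) c₀ = inr _ b⁻¹ := by
  rw [map_inv]
  exact eq_inv_of_mul_eq_one_left <| (inl_mul_inr _ c₀ b).trans <|
    (QuotientGroup.eq_one_iff _).2 (mem_zpowers _)

lemma inl_injective (hcb : orderOf c₀ ∣ orderOf b) :
    Function.Injective (inl (zpowers (c₀, b))) := by
  refine (injective_iff_map_eq_one _).2 fun c hc => ?_
  obtain ⟨n, rfl, hn⟩ := mk_eq_one_iff.1 hc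
  exact orderOf_dvd_iff_zpow_eq_one.1 <|
    (Int.natCast_dvd_natCast.2 hcb).trans (orderOf_dvd_iff_zpow_eq_one.2 hn)

lemma inr_injective (hbc : orderOf b ∣ orderOf c₀) :
    Function.Injective (inr (zpowers (c₀, b))) := by
  refine (injective_iff_map_eq_one _).2 fun x hx => ?_
  obtain ⟨n, hn, rfl⟩ := mk_eq_one_iff.1 hx
  exact orderOf_dvd_iff_zpow_eq_one.1 <|
    (Int.natCast_dvd_natCast.2 hbc).trans (orderOf_dvd_iff_zpow_eq_one.2 hn)

end

section

variable {p e l : ℕ} {g : C} {h : H} [(zpowers (g ^ p ^ l, h⁻¹)).Normal]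

lemma inl_pow_eq_inr : inl (zpowers (g ^ p ^ l, h⁻¹)) (g ^ p ^ l) = inr _ h := by
  rw [inl_eq_inr_inv, inv_inv]

lemma inl_injective_of_orderOf (hp : p ≠ 0) (hg : orderOf g = p ^ (e + l))
    (hh : orderOf h = p ^ e) : Function.Injective (inl (zpowers (g ^ p ^ l, h⁻¹))) :=
  inl_injective (by rw [orderOf_inv, orderOf_pow_pow_of_orderOf_eq hp hg, hh])

lemma inr_injective_of_orderOf (hp : p ≠ 0) (hg : orderOf g = p ^ (e + l))
    (hh : orderOf h = p ^ e) : Function.Injective (inr (zpowers (g ^ p ^ l, h⁻¹))) :=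
  inr_injective (by rw [orderOf_inv, orderOf_pow_pow_of_orderOf_eq hp hg, hh])

lemma mem_range_inr_iff (hp : p ≠ 0) (hgen : ∀ c : C, c ∈ zpowers g)
    (hg : orderOf g = p ^ (e + l)) (hh : orderOf h = p ^ e) (hexp : ∀ x : H, x ^ p ^ e = 1)
    (u : (C × H) ⧸ zpowers (g ^ p ^ l, h⁻¹)) :
    u ∈ (inr (zpowers (g ^ p ^ l, h⁻¹))).range ↔ u ^ p ^ e = 1 := by
  constructor
  · rintro ⟨x, rfl⟩
    rw [← map_pow, hexp, map_one]
  · obtain ⟨c, x, rfl⟩ := exists_eq_inl_mul_inr _ u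
    rw [(commute_inl_inr _ c x).mul_pow, ← map_pow, ← map_pow, hexp, map_one, mul_one,
      ← map_one (inl _), (inl_injective_of_orderOf hp hg hh).eq_iff]
    intro hc
    obtain ⟨d, rfl⟩ := mem_zpowers_pow_of_pow_eq_one (pow_ne_zero e hp) hgen
      (by rw [hg, pow_add, mul_comm]) hc
    exact ⟨h ^ d * x, by rw [map_mul, map_zpow, map_zpow, inl_pow_eq_inr]⟩

lemma inl_zpow_mul_inr_pow_eq_one_iff (hp : p.Prime) (hl : 1 ≤ l)
    (hg : orderOf g = p ^ (e + l)) (hh : orderOf h = p ^ e) (hexp : ∀ x : H, x ^ p ^ e = 1)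
    (m : ℤ) (y : H) :
    (inl (zpowers (g ^ p ^ l, h⁻¹)) (g ^ m) * inr _ y) ^ p ^ (e + l - 1) = 1 ↔
      (p : ℤ) ∣ m := by
  have hy : y ^ p ^ (e + l - 1) = 1 := by
    rw [show e + l - 1 = e + (l - 1) by omega, pow_add, pow_mul, hexp, one_pow]
  rw [(commute_inl_inr _ _ y).mul_pow, ← map_pow, ← map_pow, hy, map_one, mul_one,
    ← map_one (inl _), (inl_injective_of_orderOf hp.ne_zero hg hh).eq_iff,
    ← zpow_natCast, ← zpow_mul, ← orderOf_dvd_iff_zpow_eq_one, hg,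
    show p ^ (e + l) = p * p ^ (e + l - 1) by rw [← pow_succ']; congr 1; omega, Nat.cast_mul]
  exact mul_dvd_mul_iff_right (Int.natCast_ne_zero.2 (pow_ne_zero _ hp.ne_zero))

theorem exists_eq_zpow_mul_pow_of_mulEquiv (hp : p.Prime) (hl : 1 ≤ l)
    (hgen : ∀ c : C, c ∈ zpowers g) (hg : orderOf g = p ^ (e + l))
    (hexp : ∀ x : H, x ^ p ^ e = 1) {h' : H} (hh : orderOf h = p ^ e) (hh' : orderOf h' = p ^ e)
    [(zpowers (g ^ p ^ l, h'⁻¹)).Normal]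
    (φ : (C × H) ⧸ zpowers (g ^ p ^ l, h⁻¹) ≃* (C × H) ⧸ zpowers (g ^ p ^ l, h'⁻¹)) :
    ∃ (α : H ≃* H) (k : ℤ), Int.gcd k p = 1 ∧
      ∃ z ∈ center H, h' = α h ^ k * z ^ p ^ l := by
  have hinj := inr_injective_of_orderOf hp.ne_zero hg hh
  have hinj' := inr_injective_of_orderOf hp.ne_zero hg hh'
  obtain ⟨α, hα⟩ := φ.exists_apply_comp_eq_of_map_range_eq hinj hinj' <|
    map_equiv_eq_of_mem_iff_pow_eq_one φ (p ^ e)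
      (mem_range_inr_iff hp.ne_zero hgen hg hh hexp)
      (mem_range_inr_iff hp.ne_zero hgen hg hh' hexp)
  obtain ⟨c, y, hφg⟩ := exists_eq_inl_mul_inr _ (φ (inl _ g))
  obtain ⟨m, rfl⟩ := mem_zpowers_iff.1 (hgen c)
  have hm : ¬ (p : ℤ) ∣ m := fun hpm => by
    have hg_pow := (inl_zpow_mul_inr_pow_eq_one_iff hp hl hg hh' hexp m y).2 hpm
    rw [← hφg, ← map_pow, MulEquiv.map_eq_one_iff] at hg_pow
    -- `inl g = inl (g ^ 1) * inr 1`, so the same criterion now says `p ∣ 1`.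
    refine (Nat.prime_iff_prime_int.mp hp).not_dvd_one <|
      (inl_zpow_mul_inr_pow_eq_one_iff hp hl hg hh hexp 1 1).1 ?_
    rwa [zpow_one, map_one, mul_one]
  have hgZ := mem_center_of_forall_mem_zpowers hgen
  have hy : y ∈ center H := by
    refine mem_center_of_injective hinj' ?_
    rw [← inv_mul_cancel_left (inl _ (g ^ m)) (inr _ y), ← hφg]
    exact mul_mem (inv_mem (inl_mem_center _ (zpow_mem hgZ m)))
      (MulEquivClass.apply_mem_center φ (inl_mem_center _ hgZ))
  have hαh : α h = h' ^ m * y ^ p ^ l := hinj' <| by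
    have hgm : (g ^ m) ^ p ^ l = (g ^ p ^ l) ^ m := by
      rw [← zpow_natCast, ← zpow_mul, mul_comm, zpow_mul, zpow_natCast]
    rw [hα, ← inl_pow_eq_inr, map_pow, map_pow, hφg, (commute_inl_inr _ _ y).mul_pow,
      ← map_pow, hgm, map_zpow, inl_pow_eq_inr, ← map_zpow, ← map_pow, ← map_mul]
  obtain ⟨k, hk, hh'k⟩ :=
    exists_gcd_eq_one_eq_zpow_mul_pow hp (mem_center_iff.1 hy h') hh' hm (p ^ l)
  exact ⟨α, k, hk, y ^ (-k), zpow_mem hy _, hαh ▸ hh'k⟩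

end

end CentralAmalgam

lemma ZMod.mem_zpowers_ofAdd_one {n : ℕ} (c : Multiplicative (ZMod n)) :
    c ∈ zpowers (Multiplicative.ofAdd (1 : ZMod n)) :=
  mem_zpowers_iff.2 ⟨(Multiplicative.toAdd c).cast, by
    rw [← ofAdd_zsmul, zsmul_one, ZMod.intCast_zmod_cast, ofAdd_toAdd]⟩

theorem stmt_19_general (p e l : ℕ) (hp : p.Prime) (H : Type*) [Group H]
    (hexp : Monoid.exponent H = p ^ e)
    (h h' : H)
    (hord : orderOf h = p ^ e) (hord' : orderOf h' = p ^ e)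
    (hl : 1 ≤ l)
    (K K' : Subgroup (Multiplicative (ZMod (p ^ (e + l))) × H))
    (hK : K = Subgroup.zpowers
      ((Multiplicative.ofAdd (1 : ZMod (p ^ (e + l)))) ^ p ^ l, h⁻¹))
    (hK' : K' = Subgroup.zpowers
      ((Multiplicative.ofAdd (1 : ZMod (p ^ (e + l)))) ^ p ^ l, h'⁻¹))
    [K.Normal] [K'.Normal]
    (hiso : Nonempty (((Multiplicative (ZMod (p ^ (e + l))) × H) ⧸ K) ≃*
      ((Multiplicative (ZMod (p ^ (e + l))) × H) ⧸ K'))) :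
    ∃ (α : H ≃* H) (k : ℤ), Int.gcd k p = 1 ∧
      ∃ z ∈ Subgroup.center H, h' = (α h) ^ k * z ^ p ^ l := by
  obtain ⟨φ⟩ := hiso
  subst hK hK'
  exact CentralAmalgam.exists_eq_zpow_mul_pow_of_mulEquiv hp hl ZMod.mem_zpowers_ofAdd_one
    (by rw [orderOf_ofAdd_eq_addOrderOf, ZMod.addOrderOf_one])
    (fun x => hexp ▸ Monoid.pow_exponent_eq_one x) hord hord' φ

theorem stmt_19 (p e l : ℕ) (hp : p.Prime) (H : Type*) [Group H] [Finite H]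
    (hH : IsPGroup p H)
    (hZexp : Monoid.exponent (Subgroup.center H) = p ^ e)
    (hexp : Monoid.exponent H = p ^ e)
    (h h' : H) (hhZ : h ∈ Subgroup.center H) (hh'Z : h' ∈ Subgroup.center H)
    (hord : orderOf h = p ^ e) (hord' : orderOf h' = p ^ e)
    (hl : 1 ≤ l)
    (K K' : Subgroup (Multiplicative (ZMod (p ^ (e + l))) × H))
    (hK : K = Subgroup.zpowers
      ((Multiplicative.ofAdd (1 : ZMod (p ^ (e + l)))) ^ p ^ l, h⁻¹))
    (hK' : K' = Subgroup.zpowers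
      ((Multiplicative.ofAdd (1 : ZMod (p ^ (e + l)))) ^ p ^ l, h'⁻¹))
    [K.Normal] [K'.Normal]
    (hiso : Nonempty (((Multiplicative (ZMod (p ^ (e + l))) × H) ⧸ K) ≃*
      ((Multiplicative (ZMod (p ^ (e + l))) × H) ⧸ K'))) :
    ∃ (α : H ≃* H) (k : ℤ), Int.gcd k p = 1 ∧
      ∃ z ∈ Subgroup.center H, h' = (α h) ^ k * z ^ p ^ l :=
  stmt_19_general p e l hp H hexp h h' hord hord' hl K K' hK hK' hiso
end
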